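/- arXiv:2511.12358 — 3 statements merged into one kernel-verified Lean document; each statement's English description precedes it below -/
import Mathlib

section
/- Let u be a sequence over a finite alphabet. Then there exists N ∈ ℕ such that r_u(n+2) = r_u(n) + 1 for all n ≥ N if and only if u is quasi-Sturmian and some suffix of u has its language closed under reversal. -/
namespace ReflPaper

variable {A : Type*}

/-- The factor of `u` of length `n` at position `i`: `u(i) u(i+1) ⋯ u(i+n-1)`. -/
def factorAt (u : ℕ → A) (n i : ℕ) : List A :=
  (List.range n).map (fun k => u (i + k))

/-- The word `w` occurs in the sequence `u` at position `i`. -/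
def OccursAt (u : ℕ → A) (w : List A) (i : ℕ) : Prop :=
  w = factorAt u w.length i

/-- The language of `u`: the set of all factors of `u`. -/
def Lang (u : ℕ → A) : Set (List A) := {w | ∃ i, OccursAt u w i}

/-- The set of factors of `u` of length `n`. -/
def LangN (u : ℕ → A) (n : ℕ) : Set (List A) := {w | w.length = n ∧ w ∈ Lang u}

/-- The word `w` occurs infinitely many times in `u`. -/
def OccursInf (u : ℕ → A) (w : List A) : Prop := {i | OccursAt u w i}.Infinite

/-- `u` is eventually periodic. -/
def EventuallyPeriodic (u : ℕ → A) : Prop :=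
  ∃ N p : ℕ, 1 ≤ p ∧ ∀ i, N ≤ i → u (i + p) = u i

/-- Two words are reflectively equivalent if one equals the other or its reversal. -/
def ReflEquiv (w v : List A) : Prop := w = v ∨ w = v.reverse

/-- Reflective equivalence as a setoid on words. -/
def reflSetoid (A : Type*) : Setoid (List A) where
  r := ReflEquiv
  iseqv := by
    constructor
    · intro w; exact Or.inl rfl
    · intro w v h
      rcases h with h | h
      · exact Or.inl h.symm
      · subst h; simp [ReflEquiv]
    · intro w v x h1 h2
      rcases h1 with h1 | h1 <;> rcases h2 with h2 | h2 <;> subst h1 <;>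
        simp [ReflEquiv, h2]

/-- The number of reflective-equivalence classes of words in a set `S`. -/
noncomputable def nClasses (S : Set (List A)) : ℕ :=
  Set.ncard (Quotient.mk (reflSetoid A) '' S)

/-- The reflection complexity `r_u(n)`. -/
noncomputable def reflComplexity (u : ℕ → A) (n : ℕ) : ℕ := nClasses (LangN u n)

/-- The factor complexity `C_u(n) = #L_n(u)`. -/
noncomputable def factorComplexity (u : ℕ → A) (n : ℕ) : ℕ := (LangN u n).ncard

/-- The palindromic complexity `P_u(n)`. -/
noncomputable def palComplexity (u : ℕ → A) (n : ℕ) : ℕ :=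
  Set.ncard {w ∈ LangN u n | w.reverse = w}

/-- Both-sided extensions of `w` in the language of `u`. -/
def Bext (u : ℕ → A) (w : List A) : Set (List A) :=
  {x ∈ Lang u | ∃ a b : A, x = a :: (w ++ [b])}

/-- Right extensions of `w` in the language of `u`. -/
def Rext (u : ℕ → A) (w : List A) : Set (List A) :=
  {x ∈ Lang u | ∃ a : A, x = w ++ [a]}

/-- `T(w)`: the number of reflective-equivalence classes of `Bext(w) ∪ Bext(w̄)`. -/
noncomputable def TT (u : ℕ → A) (w : List A) : ℕ :=
  nClasses (Bext u w ∪ Bext u w.reverse)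

/-- `w` is a right special factor of `u`. -/
def RightSpecial (u : ℕ → A) (w : List A) : Prop :=
  ∃ a b : A, a ≠ b ∧ w ++ [a] ∈ Lang u ∧ w ++ [b] ∈ Lang u

/-- `w` is a left special factor of `u`. -/
def LeftSpecial (u : ℕ → A) (w : List A) : Prop :=
  ∃ a b : A, a ≠ b ∧ a :: w ∈ Lang u ∧ b :: w ∈ Lang u

/-- `u` is Sturmian: `C_u(n) = n + 1` for all `n`. -/
def Sturmian (u : ℕ → A) : Prop := ∀ n, factorComplexity u n = n + 1

/-- `u` is quasi-Sturmian: `C_u(n) = n + c` eventually. -/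
def QuasiSturmian (u : ℕ → A) : Prop :=
  ∃ n₀ c : ℕ, ∀ n, n₀ ≤ n → factorComplexity u n = n + c



/-! ### Auxiliary development -/

section Aux

variable {A : Type*}

lemma factorAt_length (u : ℕ → A) (n i : ℕ) : (factorAt u n i).length = n := by
  simp [factorAt]

lemma take_drop_append {a b : List A} (c : List A) {t n : ℕ}
    (ht : a.length = t) (hn : b.length = n) :
    List.take n (List.drop t (a ++ (b ++ c))) = b := by
  subst ht; subst hn; rw [List.drop_left, List.take_left]

lemma factorAt_getElem (u : ℕ → A) {n i m : ℕ} (h : m < (factorAt u n i).length) :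
    (factorAt u n i)[m] = u (i + m) := by
  simp [factorAt]

lemma factorAt_add (u : ℕ → A) (m n i : ℕ) :
    factorAt u (m + n) i = factorAt u m i ++ factorAt u n (i + m) := by
  unfold factorAt
  rw [List.range_add, List.map_append, List.map_map]
  congr 1
  apply List.map_congr_left
  intro a _
  simp [Nat.add_assoc, Nat.add_comm a m, Function.comp]

lemma factorAt_succ_right (u : ℕ → A) (n i : ℕ) :
    factorAt u (n + 1) i = factorAt u n i ++ [u (i + n)] := by
  rw [factorAt_add]
  simp [factorAt, show List.range 1 = [0] from rfl]

lemma factorAt_succ_left (u : ℕ → A) (n i : ℕ) :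
    factorAt u (n + 1) i = u i :: factorAt u n (i + 1) := by
  rw [Nat.add_comm n 1, factorAt_add]
  simp [factorAt, show List.range 1 = [0] from rfl]

lemma factorAt_dropLast (u : ℕ → A) (n i : ℕ) :
    (factorAt u (n + 1) i).dropLast = factorAt u n i := by
  rw [factorAt_succ_right]; exact List.dropLast_concat

lemma factorAt_tail (u : ℕ → A) (n i : ℕ) :
    (factorAt u (n + 1) i).tail = factorAt u n (i + 1) := by
  rw [factorAt_succ_left]; rfl

lemma occursAt_factorAt (u : ℕ → A) (n i : ℕ) : OccursAt u (factorAt u n i) i := by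
  unfold OccursAt
  rw [factorAt_length]

lemma factorAt_mem_lang (u : ℕ → A) (n i : ℕ) : factorAt u n i ∈ Lang u :=
  ⟨i, occursAt_factorAt u n i⟩

lemma factorAt_mem_langN (u : ℕ → A) (n i : ℕ) : factorAt u n i ∈ LangN u n :=
  ⟨factorAt_length u n i, factorAt_mem_lang u n i⟩

lemma occursAt_iff_eq (u : ℕ → A) {w : List A} {n i : ℕ} (h : w.length = n) :
    OccursAt u w i ↔ w = factorAt u n i := by
  unfold OccursAt; rw [h]

lemma mem_langN_iff {u : ℕ → A} {w : List A} {n : ℕ} :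
    w ∈ LangN u n ↔ w.length = n ∧ ∃ i, w = factorAt u n i := by
  constructor
  · rintro ⟨hl, i, hocc⟩
    exact ⟨hl, i, by rwa [occursAt_iff_eq u hl] at hocc⟩
  · rintro ⟨hl, i, h⟩
    exact ⟨hl, i, by rwa [occursAt_iff_eq u hl]⟩

/-- window lemma : a window inside a factor. -/
lemma factorAt_window (u : ℕ → A) {t n L : ℕ} (i : ℕ) (h : t + n ≤ L) :
    factorAt u n (i + t) = ((factorAt u L i).drop t).take n := by
  obtain ⟨r, hr⟩ : ∃ r, L = t + (n + r) := ⟨L - (t + n), by omega⟩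
  subst hr
  rw [factorAt_add, factorAt_add]
  exact (take_drop_append _ (factorAt_length u t i) (factorAt_length u n (i+t))).symm

lemma factorAt_take (u : ℕ → A) {n m : ℕ} (i : ℕ) (h : m ≤ n) :
    (factorAt u n i).take m = factorAt u m i := by
  have := factorAt_window u (t := 0) (n := m) (L := n) i (by omega)
  simpa using this.symm

lemma infix_mem_lang {u : ℕ → A} {w x : List A} (h : w <:+: x) (hx : x ∈ Lang u) :
    w ∈ Lang u := by
  obtain ⟨i, hocc⟩ := hx
  obtain ⟨s, t, hst⟩ := h
  refine ⟨i + s.length, ?_⟩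
  rw [occursAt_iff_eq u rfl]
  have hxl : x = factorAt u x.length i := hocc
  have hle : s.length + w.length ≤ x.length := by
    rw [← hst]; simp only [List.length_append]; omega
  rw [factorAt_window u i hle, ← hxl, ← hst, List.append_assoc, List.drop_left,
    List.take_left]

lemma prefix_mem_lang {u : ℕ → A} {w x : List A} (h : w <+: x) (hx : x ∈ Lang u) :
    w ∈ Lang u := infix_mem_lang h.isInfix hx

/-- a factor extends to the right -/
lemma exists_right_ext {u : ℕ → A} {w : List A} (hx : w ∈ Lang u) :
    ∃ a, w ++ [a] ∈ Lang u := by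
  obtain ⟨i, hocc⟩ := hx
  refine ⟨u (i + w.length), i, ?_⟩
  rw [occursAt_iff_eq u (n := w.length + 1) (by simp)]
  rw [factorAt_succ_right, ← hocc]

lemma occursAt_append_singleton {u : ℕ → A} {w : List A} {a : A} {i : ℕ} :
    OccursAt u (w ++ [a]) i ↔ OccursAt u w i ∧ u (i + w.length) = a := by
  unfold OccursAt
  rw [List.length_append, List.length_singleton, factorAt_succ_right]
  constructor
  · intro h
    have := List.append_inj h (by simp [factorAt_length])
    exact ⟨this.1, by simpa using this.2.symm⟩
  · rintro ⟨h1, h2⟩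
    rw [← h1, h2]

lemma occursAt_prefix {u : ℕ → A} {w x : List A} {i : ℕ} (h : w <+: x)
    (hx : OccursAt u x i) : OccursAt u w i := by
  rw [occursAt_iff_eq u rfl] at hx ⊢
  obtain ⟨t, ht⟩ := h
  have hle : w.length ≤ x.length := by rw [← ht]; simp
  rw [← factorAt_take u i hle, ← hx, ← ht, List.take_left]

/-- shift lemmas -/
lemma factorAt_shift (u : ℕ → A) (k n i : ℕ) :
    factorAt (fun j => u (j + k)) n i = factorAt u n (i + k) := by
  unfold factorAt
  apply List.map_congr_left
  intro a _
  show u ((i + a) + k) = u ((i + k) + a)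
  congr 1
  omega

lemma occursAt_shift {u : ℕ → A} {w : List A} {k i : ℕ} :
    OccursAt (fun j => u (j + k)) w i ↔ OccursAt u w (i + k) := by
  unfold OccursAt
  rw [factorAt_shift]

lemma mem_lang_shift_iff {u : ℕ → A} {w : List A} {k : ℕ} :
    w ∈ Lang (fun j => u (j + k)) ↔ ∃ i, k ≤ i ∧ OccursAt u w i := by
  constructor
  · rintro ⟨i, h⟩
    exact ⟨i + k, by omega, occursAt_shift.mp h⟩
  · rintro ⟨i, hk, h⟩
    refine ⟨i - k, ?_⟩
    rw [occursAt_shift, Nat.sub_add_cancel hk]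
    exact h

lemma lang_shift_subset (u : ℕ → A) (k : ℕ) : Lang (fun j => u (j + k)) ⊆ Lang u := by
  intro w hw
  obtain ⟨i, _, h⟩ := mem_lang_shift_iff.mp hw
  exact ⟨i, h⟩

/-! ### Finiteness -/

lemma finite_langN (u : ℕ → A) [Finite A] (n : ℕ) : (LangN u n).Finite := by
  apply (List.finite_length_le A n).subset
  intro w hw
  simp only [Set.mem_setOf_eq]
  rw [hw.1]

lemma langN_nonempty (u : ℕ → A) (n : ℕ) : (LangN u n).Nonempty :=
  ⟨factorAt u n 0, factorAt_mem_langN u n 0⟩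

lemma factorComplexity_pos (u : ℕ → A) [Finite A] (n : ℕ) : 0 < factorComplexity u n := by
  rw [factorComplexity, Set.ncard_pos (finite_langN u n)]
  exact langN_nonempty u n

lemma langN_zero (u : ℕ → A) : LangN u 0 = {([] : List A)} := by
  ext w
  simp only [LangN, Set.mem_setOf_eq, Set.mem_singleton_iff, List.length_eq_zero_iff]
  constructor
  · tauto
  · rintro rfl
    exact ⟨rfl, factorAt_mem_lang u 0 0⟩

lemma factorComplexity_zero (u : ℕ → A) : factorComplexity u 0 = 1 := by
  rw [factorComplexity, langN_zero, Set.ncard_singleton]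

lemma factorComplexity_mono (u : ℕ → A) [Finite A] (n : ℕ) :
    factorComplexity u n ≤ factorComplexity u (n + 1) := by
  have hsub : LangN u n ⊆ (fun w => List.take n w) '' LangN u (n + 1) := by
    rintro w hw
    obtain ⟨hl, i, hocc⟩ := mem_langN_iff.mp hw
    refine ⟨factorAt u (n+1) i, factorAt_mem_langN u (n+1) i, ?_⟩
    show List.take n (factorAt u (n+1) i) = w
    rw [factorAt_take u i (Nat.le_succ n), ← hocc]
  calc factorComplexity u n ≤ ((fun w => List.take n w) '' LangN u (n + 1)).ncard :=
        Set.ncard_le_ncard hsub ((finite_langN u (n+1)).image _)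
    _ ≤ factorComplexity u (n + 1) := Set.ncard_image_le (finite_langN u (n+1))


/-! ### Counting: the identity `2 r = C + s` -/

def PalSet (u : ℕ → A) (n : ℕ) : Set (List A) := {w ∈ LangN u n | w.reverse = w}
def AsymSet (u : ℕ → A) (n : ℕ) : Set (List A) := {w ∈ LangN u n | w.reverse ∉ Lang u}
def SingSet (u : ℕ → A) (n : ℕ) : Set (List A) :=
  {w ∈ LangN u n | w.reverse = w ∨ w.reverse ∉ Lang u}
def PairSet (u : ℕ → A) (n : ℕ) : Set (List A) :=
  {w ∈ LangN u n | w.reverse ≠ w ∧ w.reverse ∈ Lang u}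

noncomputable def sCount (u : ℕ → A) (n : ℕ) : ℕ := (SingSet u n).ncard
noncomputable def qCount (u : ℕ → A) (n : ℕ) : ℕ := (AsymSet u n).ncard

lemma palComplexity_eq (u : ℕ → A) (n : ℕ) : palComplexity u n = (PalSet u n).ncard := rfl

lemma refl_le_factor (u : ℕ → A) [Finite A] (n : ℕ) :
    reflComplexity u n ≤ factorComplexity u n :=
  Set.ncard_image_le (finite_langN u n)

lemma quotient_mk_eq_iff {w v : List A} :
    Quotient.mk (reflSetoid A) w = Quotient.mk (reflSetoid A) v ↔ (w = v ∨ w = v.reverse) :=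
  ⟨fun h => Quotient.exact h, fun h => Quotient.sound h⟩

lemma pairSet_card (u : ℕ → A) [Finite A] (n : ℕ) :
    (PairSet u n).ncard = 2 * (Quotient.mk (reflSetoid A) '' PairSet u n).ncard := by
  classical
  have hfin : (PairSet u n).Finite := (finite_langN u n).subset (fun w hw => hw.1)
  set F : Finset (List A) := hfin.toFinset with hF
  have hmemF : ∀ w, w ∈ F ↔ w ∈ PairSet u n := fun w => hfin.mem_toFinset
  set Q : List A → Quotient (reflSetoid A) := Quotient.mk (reflSetoid A) with hQ
  have h1 : (PairSet u n).ncard = F.card := Set.ncard_eq_toFinset_card _ hfin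
  have h2 : (Q '' PairSet u n).ncard = (F.image Q).card := by
    rw [← Set.ncard_coe_finset]
    congr 1
    rw [Finset.coe_image, hfin.coe_toFinset]
  rw [h1, h2]
  rw [Finset.card_eq_sum_card_fiberwise (f := Q) (t := F.image Q)
    (fun x hx => Finset.mem_image_of_mem Q hx)]
  rw [Finset.sum_congr rfl (g := fun _ => 2), Finset.sum_const, smul_eq_mul, Nat.mul_comm]
  intro c hc
  obtain ⟨w₀, hw₀F, rfl⟩ := Finset.mem_image.mp hc
  have hw₀ : w₀ ∈ PairSet u n := (hmemF w₀).mp hw₀F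
  have hfil : F.filter (fun a => Q a = Q w₀) = {w₀, w₀.reverse} := by
    ext x
    simp only [Finset.mem_filter, Finset.mem_insert, Finset.mem_singleton]
    constructor
    · rintro ⟨hxF, hQx⟩
      exact quotient_mk_eq_iff.mp hQx
    · rintro (rfl | rfl)
      · exact ⟨hw₀F, rfl⟩
      · refine ⟨?_, ?_⟩
        · rw [hmemF]
          refine ⟨⟨by simpa using hw₀.1.1, hw₀.2.2⟩, ?_, ?_⟩
          · rw [List.reverse_reverse]
            intro h
            exact hw₀.2.1 h.symm
          · rw [List.reverse_reverse]
            exact hw₀.1.2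
        · exact quotient_mk_eq_iff.mpr (Or.inr rfl)
  rw [hfil]
  rw [Finset.card_insert_of_notMem (by simp [Ne.symm hw₀.2.1]), Finset.card_singleton]

lemma langN_split (u : ℕ → A) (n : ℕ) :
    LangN u n = SingSet u n ∪ PairSet u n := by
  ext w
  simp only [SingSet, PairSet, Set.mem_union, Set.mem_setOf_eq]
  by_cases h1 : w.reverse = w <;> by_cases h2 : w.reverse ∈ Lang u <;> tauto

lemma two_mul_reflComplexity (u : ℕ → A) [Finite A] (n : ℕ) :
    2 * reflComplexity u n = factorComplexity u n + sCount u n := by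
  classical
  set Q : List A → Quotient (reflSetoid A) := Quotient.mk (reflSetoid A) with hQ
  have hfinS : (SingSet u n).Finite := (finite_langN u n).subset (fun w hw => hw.1)
  have hfinP : (PairSet u n).Finite := (finite_langN u n).subset (fun w hw => hw.1)
  have himg : Q '' LangN u n = Q '' SingSet u n ∪ Q '' PairSet u n := by
    rw [langN_split, Set.image_union]
  have hdisj : Disjoint (Q '' SingSet u n) (Q '' PairSet u n) := by
    rw [Set.disjoint_left]
    rintro c ⟨w, hw, rfl⟩ ⟨w', hw', hQw⟩
    rcases quotient_mk_eq_iff.mp hQw with rfl | h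
    · rcases hw.2 with h | h
      · exact hw'.2.1 h
      · exact h hw'.2.2
    · rcases hw.2 with hpal | hasym
      · have : w'.reverse = w' := by
          rw [h, List.reverse_reverse]
          exact hpal.symm
        exact hw'.2.1 this
      · exact hasym (by rw [← h]; exact hw'.1.2)
  have hinjS : Set.InjOn Q (SingSet u n) := by
    intro w hw w' hw' hQw
    rcases quotient_mk_eq_iff.mp hQw with h | h
    · exact h
    · rcases hw'.2 with hpal | hasym
      · rw [h, hpal]
      · exfalso
        subst h
        exact hasym hw.1.2
  have hr : reflComplexity u n = sCount u n + (Q '' PairSet u n).ncard := by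
    rw [reflComplexity, nClasses, himg,
      Set.ncard_union_eq hdisj (hfinS.image _) (hfinP.image _),
      Set.ncard_image_of_injOn hinjS, sCount]
  have hC : factorComplexity u n = sCount u n + (PairSet u n).ncard := by
    rw [factorComplexity, langN_split,
      Set.ncard_union_eq ?_ hfinS hfinP]
    · rfl
    · rw [Set.disjoint_left]
      rintro w hw hw'
      rcases hw.2 with h | h
      · exact hw'.2.1 h
      · exact h hw'.2.2
  rw [hr, hC, pairSet_card]
  ring

lemma sCount_split (u : ℕ → A) [Finite A] (n : ℕ) :
    sCount u n = palComplexity u n + qCount u n := by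
  have hfinP : (PalSet u n).Finite := (finite_langN u n).subset (fun w hw => hw.1)
  have hfinA : (AsymSet u n).Finite := (finite_langN u n).subset (fun w hw => hw.1)
  have hsplit : SingSet u n = PalSet u n ∪ AsymSet u n := by
    ext w
    simp only [SingSet, PalSet, AsymSet, Set.mem_union, Set.mem_setOf_eq]
    tauto
  have hdisj : Disjoint (PalSet u n) (AsymSet u n) := by
    rw [Set.disjoint_left]
    rintro w hw hw'
    exact hw'.2 (by rw [hw.2]; exact hw.1.2)
  rw [sCount, hsplit, Set.ncard_union_eq hdisj hfinP hfinA, palComplexity_eq, qCount]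

lemma parity_sCount (u : ℕ → A) [Finite A] (n : ℕ) :
    (factorComplexity u n + sCount u n) % 2 = 0 := by
  rw [← two_mul_reflComplexity]
  omega

/-! ### Monotonicity of `qCount` -/

lemma asymSet_finite (u : ℕ → A) [Finite A] (n : ℕ) : (AsymSet u n).Finite :=
  (finite_langN u n).subset (fun w hw => hw.1)

open Classical in
/-- the canonical right extension of a factor -/
noncomputable def rext (u : ℕ → A) (w : List A) : List A :=
  if h : w ∈ Lang u then w ++ [u (Classical.choose h + w.length)] else w

lemma rext_spec {u : ℕ → A} {w : List A} (h : w ∈ Lang u) :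
    rext u w = w ++ [u (Classical.choose h + w.length)] ∧ rext u w ∈ Lang u := by
  constructor
  · rw [rext, dif_pos h]
  · rw [rext, dif_pos h]
    have hocc : OccursAt u w (Classical.choose h) := Classical.choose_spec h
    refine ⟨Classical.choose h, ?_⟩
    rw [occursAt_iff_eq u (n := w.length + 1) (by simp)]
    rw [factorAt_succ_right]
    rw [occursAt_iff_eq u rfl] at hocc
    rw [← hocc]

lemma rext_take {u : ℕ → A} {w : List A} (h : w ∈ Lang u) :
    (rext u w).take w.length = w := by
  rw [(rext_spec h).1, List.take_left]

lemma rext_length {u : ℕ → A} {w : List A} (h : w ∈ Lang u) :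
    (rext u w).length = w.length + 1 := by
  rw [(rext_spec h).1]; simp

lemma suffix_reverse_mem {u : ℕ → A} {w : List A} {a : A}
    (h : (w ++ [a]).reverse ∈ Lang u) : w.reverse ∈ Lang u := by
  apply infix_mem_lang _ h
  apply List.IsSuffix.isInfix
  rw [List.reverse_append]
  exact ⟨[a].reverse, rfl⟩

lemma rext_maps {u : ℕ → A} {n : ℕ} {w : List A} (hw : w ∈ AsymSet u n) :
    rext u w ∈ AsymSet u (n + 1) := by
  obtain ⟨⟨hl, hmem⟩, hasym⟩ := hw
  obtain ⟨heq, hmemext⟩ := rext_spec hmem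
  refine ⟨⟨by rw [rext_length hmem, hl], hmemext⟩, ?_⟩
  intro hrev
  rw [heq] at hrev
  exact hasym (suffix_reverse_mem hrev)

lemma rext_injOn {u : ℕ → A} {n : ℕ} : Set.InjOn (rext u) (AsymSet u n) := by
  intro w hw w' hw' heq
  have h1 := rext_take hw.1.2
  have h2 := rext_take hw'.1.2
  rw [hw.1.1] at h1
  rw [hw'.1.1] at h2
  rw [← h1, ← h2, heq]

lemma qCount_mono (u : ℕ → A) [Finite A] (n : ℕ) : qCount u n ≤ qCount u (n + 1) :=
  Set.ncard_le_ncard_of_injOn (rext u) (fun _ hw => rext_maps hw) rext_injOn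
    (asymSet_finite u (n+1))

lemma qCount_mono_le (u : ℕ → A) [Finite A] {m n : ℕ} (h : m ≤ n) :
    qCount u m ≤ qCount u n := by
  induction n with
  | zero => simp_all
  | succ k ih =>
    rcases Nat.lt_or_ge m (k+1) with h' | h'
    · exact le_trans (ih (by omega)) (qCount_mono u k)
    · have : m = k + 1 := by omega
      subst this
      rfl


/-! ### Sum lemmas -/

lemma sum_eq_card_all_one {β : Type*} {s : Finset β} {f : β → ℕ}
    (h1 : ∀ b ∈ s, 1 ≤ f b) (h : ∑ b ∈ s, f b = s.card) : ∀ b ∈ s, f b = 1 := by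
  by_contra hc
  push_neg at hc
  obtain ⟨b, hb, hfb⟩ := hc
  have h2 : 2 ≤ f b := by have := h1 b hb; omega
  have : s.card + 1 ≤ ∑ x ∈ s, f x := by
    classical
    rw [← Finset.sum_erase_add s f hb]
    have hcard : (s.erase b).card = s.card - 1 := Finset.card_erase_of_mem hb
    have hle : (s.erase b).card ≤ ∑ x ∈ s.erase b, f x := by
      calc (s.erase b).card = ∑ _x ∈ s.erase b, 1 := by simp
        _ ≤ _ := Finset.sum_le_sum (fun x hx => h1 x (Finset.mem_of_mem_erase hx))
    have hpos : 1 ≤ s.card := Finset.card_pos.mpr ⟨b, hb⟩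
    omega
  omega

lemma sum_eq_card_add_one {β : Type*} {s : Finset β} {f : β → ℕ}
    (h1 : ∀ b ∈ s, 1 ≤ f b) (h : ∑ b ∈ s, f b = s.card + 1) :
    (∀ b ∈ s, f b ≤ 2) ∧
      ∀ b ∈ s, ∀ b' ∈ s, b ≠ b' → 2 ≤ f b → 2 ≤ f b' → False := by
  classical
  constructor
  · intro b hb
    by_contra hc
    have h3 : 3 ≤ f b := by omega
    have : s.card + 2 ≤ ∑ x ∈ s, f x := by
      rw [← Finset.sum_erase_add s f hb]
      have hcard : (s.erase b).card = s.card - 1 := Finset.card_erase_of_mem hb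
      have hle : (s.erase b).card ≤ ∑ x ∈ s.erase b, f x := by
        calc (s.erase b).card = ∑ _x ∈ s.erase b, 1 := by simp
          _ ≤ _ := Finset.sum_le_sum (fun x hx => h1 x (Finset.mem_of_mem_erase hx))
      have hpos : 1 ≤ s.card := Finset.card_pos.mpr ⟨b, hb⟩
      omega
    omega
  · intro b hb b' hb' hne h2 h2'
    have hb'e : b' ∈ s.erase b := Finset.mem_erase.mpr ⟨Ne.symm hne, hb'⟩
    have : s.card + 2 ≤ ∑ x ∈ s, f x := by
      rw [← Finset.sum_erase_add s f hb, ← Finset.sum_erase_add (s.erase b) f hb'e]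
      have hcard : ((s.erase b).erase b').card = s.card - 2 := by
        rw [Finset.card_erase_of_mem hb'e, Finset.card_erase_of_mem hb]
        omega
      have hle : ((s.erase b).erase b').card ≤ ∑ x ∈ (s.erase b).erase b', f x := by
        calc ((s.erase b).erase b').card = ∑ _x ∈ (s.erase b).erase b', 1 := by simp
          _ ≤ _ := Finset.sum_le_sum
              (fun x hx => h1 x (Finset.mem_of_mem_erase (Finset.mem_of_mem_erase hx)))
      have hpos : 2 ≤ s.card := by
        have := Finset.card_pos.mpr ⟨b', hb'e⟩
        have := Finset.card_erase_of_mem hb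
        omega
      omega
    omega

/-! ### Right-extension fibers -/

noncomputable def FL (u : ℕ → A) [Finite A] (n : ℕ) : Finset (List A) :=
  (finite_langN u n).toFinset

lemma mem_FL {u : ℕ → A} [Finite A] {n : ℕ} {w : List A} :
    w ∈ FL u n ↔ w ∈ LangN u n := Set.Finite.mem_toFinset _

lemma card_FL (u : ℕ → A) [Finite A] (n : ℕ) :
    (FL u n).card = factorComplexity u n := (Set.ncard_eq_toFinset_card _ _).symm

open Classical in
lemma card_fiber_right (u : ℕ → A) [Finite A] (n : ℕ) :
    factorComplexity u (n+1)
      = ∑ w ∈ FL u n, ((FL u (n+1)).filter (fun v => v.dropLast = w)).card := by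
  rw [← card_FL]
  apply Finset.card_eq_sum_card_fiberwise
  intro v hv
  obtain ⟨hl, i, hocc⟩ := mem_langN_iff.mp (mem_FL.mp hv)
  rw [Finset.mem_coe, mem_FL]
  rw [hocc, factorAt_dropLast]
  exact factorAt_mem_langN u n i

open Classical in
lemma fiber_right_nonempty (u : ℕ → A) [Finite A] {n : ℕ} {w : List A} (hw : w ∈ FL u n) :
    1 ≤ ((FL u (n+1)).filter (fun v => v.dropLast = w)).card := by
  obtain ⟨hl, hmem⟩ := mem_FL.mp hw
  refine Finset.card_pos.mpr ⟨rext u w, Finset.mem_filter.mpr ⟨?_, ?_⟩⟩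
  · rw [mem_FL]
    exact ⟨by rw [rext_length hmem, hl], (rext_spec hmem).2⟩
  · rw [(rext_spec hmem).1]
    exact List.dropLast_concat

open Classical in
lemma mem_fiber_right {u : ℕ → A} [Finite A] {n : ℕ} {w x : List A} {a : A}
    (hl : w.length = n) (hx : x = w ++ [a]) (hmem : x ∈ Lang u) :
    x ∈ (FL u (n+1)).filter (fun v => v.dropLast = w) := by
  refine Finset.mem_filter.mpr ⟨mem_FL.mpr ⟨by rw [hx]; simp [hl], hmem⟩, ?_⟩
  rw [hx]
  exact List.dropLast_concat

/-- If `C(n+1) = C(n)`, extensions are deterministic. -/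
lemma ext_deterministic (u : ℕ → A) [Finite A] {n : ℕ}
    (h : factorComplexity u (n+1) = factorComplexity u n)
    {w : List A} {a b : A} (hl : w.length = n)
    (ha : w ++ [a] ∈ Lang u) (hb : w ++ [b] ∈ Lang u) : a = b := by
  classical
  have hwL : w ∈ FL u n := mem_FL.mpr ⟨hl, prefix_mem_lang ⟨[a], rfl⟩ ha⟩
  have hsum := card_fiber_right u n
  rw [h, ← card_FL] at hsum
  have hone := sum_eq_card_all_one (fun b hb => fiber_right_nonempty u hb) hsum.symm w hwL
  have hma := mem_fiber_right hl rfl ha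
  have hmb := mem_fiber_right hl rfl hb
  have := Finset.card_le_one.mp (le_of_eq hone) _ hma _ hmb
  simpa using this

/-- If `C(n+1) = C(n) + 1` : at most 2 extensions; the right-special factor is unique. -/
lemma rs_structure (u : ℕ → A) [Finite A] {n : ℕ}
    (h : factorComplexity u (n+1) = factorComplexity u n + 1)
    {w : List A} {a b : A} (hl : w.length = n) (hab : a ≠ b)
    (ha : w ++ [a] ∈ Lang u) (hb : w ++ [b] ∈ Lang u) :
    (∀ c, w ++ [c] ∈ Lang u → c = a ∨ c = b) ∧
      (∀ w' (a' b' : A), w'.length = n → a' ≠ b' → w' ++ [a'] ∈ Lang u →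
        w' ++ [b'] ∈ Lang u → w' = w) := by
  classical
  have hwL : w ∈ FL u n := mem_FL.mpr ⟨hl, prefix_mem_lang ⟨[a], rfl⟩ ha⟩
  have hsum := card_fiber_right u n
  rw [h, ← card_FL] at hsum
  obtain ⟨hle2, huniq⟩ := sum_eq_card_add_one (fun b hb => fiber_right_nonempty u hb) hsum.symm
  have hma := mem_fiber_right hl rfl ha
  have hmb := mem_fiber_right hl rfl hb
  have hpairsub : ({w ++ [a], w ++ [b]} : Finset (List A))
      ⊆ (FL u (n+1)).filter (fun v => v.dropLast = w) := by
    intro x hx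
    rcases Finset.mem_insert.mp hx with rfl | hx
    · exact hma
    · rw [Finset.mem_singleton.mp hx]
      exact hmb
  have hpaircard : ({w ++ [a], w ++ [b]} : Finset (List A)).card = 2 := by
    rw [Finset.card_insert_of_notMem (by simp [hab]), Finset.card_singleton]
  have h2 : 2 ≤ ((FL u (n+1)).filter (fun v => v.dropLast = w)).card := by
    rw [← hpaircard]
    exact Finset.card_le_card hpairsub
  constructor
  · intro c hc
    have heq : (FL u (n+1)).filter (fun v => v.dropLast = w)
        = ({w ++ [a], w ++ [b]} : Finset (List A)) := by
      apply (Finset.eq_of_subset_of_card_le hpairsub ?_).symm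
      rw [hpaircard]
      exact hle2 w hwL
    have := heq ▸ mem_fiber_right hl rfl hc
    rcases Finset.mem_insert.mp this with h' | h'
    · left; simpa using h'
    · right; simpa using Finset.mem_singleton.mp h'
  · intro w' a' b' hl' hab' ha' hb'
    by_contra hne
    have hw'L : w' ∈ FL u n := mem_FL.mpr ⟨hl', prefix_mem_lang ⟨[a'], rfl⟩ ha'⟩
    have hpairsub' : ({w' ++ [a'], w' ++ [b']} : Finset (List A))
        ⊆ (FL u (n+1)).filter (fun v => v.dropLast = w') := by
      intro x hx
      rcases Finset.mem_insert.mp hx with rfl | hx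
      · exact mem_fiber_right hl' rfl ha'
      · rw [Finset.mem_singleton.mp hx]
        exact mem_fiber_right hl' rfl hb'
    have h2' : 2 ≤ ((FL u (n+1)).filter (fun v => v.dropLast = w')).card := by
      have : ({w' ++ [a'], w' ++ [b']} : Finset (List A)).card = 2 := by
        rw [Finset.card_insert_of_notMem (by simp [hab']), Finset.card_singleton]
      rw [← this]
      exact Finset.card_le_card hpairsub'
    exact huniq _ hw'L _ hwL (by simpa using hne) h2' h2

/-! ### Determinism and eventual periodicity -/

lemma ep_of_det (u : ℕ → A) [Finite A] {M n : ℕ}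
    (hdet : ∀ i j, M ≤ i → M ≤ j → factorAt u n i = factorAt u n j →
      u (i + n) = u (j + n)) :
    EventuallyPeriodic u := by
  have haux : ∀ t t' : ℕ, t < t' →
      (∀ m : Fin n, u (M + t + m) = u (M + t' + m)) → EventuallyPeriodic u := by
    intro t t' htt hfe
    set i := M + t with hi
    set j := M + t' with hj
    set p := t' - t with hp
    have hp1 : 1 ≤ p := by omega
    have hji : j = i + p := by omega
    have hwin0 : factorAt u n i = factorAt u n j := by
      apply List.ext_getElem (by simp [factorAt_length])
      intro m h1 h2
      rw [factorAt_getElem u h1, factorAt_getElem u h2]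
      exact hfe ⟨m, by simpa [factorAt_length] using h1⟩
    have key : ∀ m, factorAt u n (i + m) = factorAt u n (j + m) := by
      intro m
      induction m with
      | zero => simpa using hwin0
      | succ m ih =>
        have hlast : u (i + m + n) = u (j + m + n) :=
          hdet (i + m) (j + m) (by omega) (by omega) ih
        have e1 : factorAt u (n+1) (i+m) = factorAt u (n+1) (j+m) := by
          rw [factorAt_succ_right, factorAt_succ_right, ih, hlast]
        rw [factorAt_succ_left, factorAt_succ_left] at e1
        have e2 := (List.cons.injEq _ _ _ _).mp e1
        have hi' : i + (m + 1) = i + m + 1 := by omega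
        have hj' : j + (m + 1) = j + m + 1 := by omega
        rw [hi', hj']
        exact e2.2
    refine ⟨i + n, p, hp1, ?_⟩
    intro s hs
    have hm : s = i + (s - i - n) + n := by omega
    have h2 := hdet (i + (s - i - n)) (j + (s - i - n)) (by omega) (by omega)
      (key (s - i - n))
    have harg : j + (s - i - n) + n = s + p := by omega
    rw [harg, ← hm] at h2
    exact h2.symm
  have : ∃ t t', t ≠ t' ∧ (fun t (m : Fin n) => u (M + t + m)) t
      = (fun t (m : Fin n) => u (M + t + m)) t' :=
    Finite.exists_ne_map_eq_of_infinite _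
  obtain ⟨t, t', hne, heq⟩ := this
  rcases Nat.lt_or_ge t t' with h | h
  · exact haux t t' h (fun m => congrFun heq m)
  · have h' : t' < t := by omega
    exact haux t' t h' (fun m => (congrFun heq m).symm)

/-- Morse–Hedlund, one direction. -/
lemma ep_of_complexity_eq (u : ℕ → A) [Finite A] {n : ℕ}
    (h : factorComplexity u (n+1) = factorComplexity u n) : EventuallyPeriodic u := by
  apply ep_of_det u (M := 0) (n := n)
  intro i j _ _ hw
  apply ext_deterministic u h (factorAt_length u n i)
  · rw [← factorAt_succ_right]
    exact factorAt_mem_lang u (n+1) i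
  · rw [hw, ← factorAt_succ_right]
    exact factorAt_mem_lang u (n+1) j

lemma complexity_bdd_of_ep (u : ℕ → A) [Finite A] (h : EventuallyPeriodic u) :
    ∃ B, ∀ n, factorComplexity u n ≤ B := by
  obtain ⟨N, p, hp, hper⟩ := h
  refine ⟨N + p, fun n => ?_⟩
  have descent : ∀ i, ∀ n, ∃ j, j < N + p ∧ factorAt u n j = factorAt u n i := by
    intro i
    induction i using Nat.strong_induction_on with
    | _ i ih =>
      intro n
      rcases Nat.lt_or_ge i (N + p) with h' | h'
      · exact ⟨i, h', rfl⟩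
      · have hstep : factorAt u n (i - p) = factorAt u n i := by
          apply List.ext_getElem (by simp [factorAt_length])
          intro m h1 h2
          rw [factorAt_getElem u h1, factorAt_getElem u h2]
          have := hper (i - p + m) (by omega)
          have harg : i - p + m + p = i + m := by omega
          rw [harg] at this
          exact this.symm
        obtain ⟨j, hj, hjeq⟩ := ih (i - p) (by omega) n
        exact ⟨j, hj, by rw [hjeq, hstep]⟩
  have haux : ∀ w ∈ Lang u, ∃ j, j < N + p ∧ OccursAt u w j := by
    intro w hw
    obtain ⟨i, hocc⟩ := hw
    obtain ⟨j, hj, hjeq⟩ := descent i w.length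
    refine ⟨j, hj, ?_⟩
    rw [occursAt_iff_eq u rfl] at hocc ⊢
    rw [hjeq, ← hocc]
  classical
  set f : List A → ℕ := fun w => if hw : w ∈ Lang u then (haux w hw).choose else 0 with hf
  have : factorComplexity u n ≤ ((Finset.range (N + p) : Finset ℕ) : Set ℕ).ncard := by
    apply Set.ncard_le_ncard_of_injOn f
    · intro w hw
      simpa only [hf, dif_pos hw.2, Finset.coe_range, Set.mem_Iio] using
        (haux w hw.2).choose_spec.1
    · intro w hw w' hw' heq
      show w = w'
      simp only [hf, dif_pos hw.2, dif_pos hw'.2] at heq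
      have h1 := (haux w hw.2).choose_spec.2
      have h2 := (haux w' hw'.2).choose_spec.2
      rw [occursAt_iff_eq u hw.1] at h1
      rw [occursAt_iff_eq u hw'.1] at h2
      exact h1.trans ((congrArg (factorAt u n) heq).trans h2.symm)
  rwa [Set.ncard_coe_finset, Finset.card_range] at this

/-! ### Eventually-constant lemmas -/

lemma mono_bdd_eventually_const {f : ℕ → ℕ} {N B : ℕ}
    (hmono : ∀ n, N ≤ n → f n ≤ f (n+1)) (hbdd : ∀ n, N ≤ n → f n ≤ B) :
    ∃ N', N ≤ N' ∧ ∀ n, N' ≤ n → f n = f N' := by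
  have hchain : ∀ a b, N ≤ a → a ≤ b → f a ≤ f b := by
    intro a b ha hab
    induction b, hab using Nat.le_induction with
    | base => rfl
    | succ b hab ih => exact le_trans ih (hmono b (by omega))
  by_contra hc
  push_neg at hc
  have grow : ∀ N', N ≤ N' → ∃ n, N' ≤ n ∧ f N' < f n := by
    intro N' hN'
    obtain ⟨n, hn, hne⟩ := hc N' hN'
    exact ⟨n, hn, lt_of_le_of_ne (hchain N' n hN' hn) (Ne.symm hne)⟩
  have claim : ∀ j, ∃ n, N ≤ n ∧ f N + j ≤ f n := by
    intro j
    induction j with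
    | zero => exact ⟨N, le_refl N, by omega⟩
    | succ j ih =>
      obtain ⟨n, hn, hj⟩ := ih
      obtain ⟨n', hn', hlt⟩ := grow n hn
      exact ⟨n', by omega, by omega⟩
  obtain ⟨n, hn, hj⟩ := claim (B + 1)
  have := hbdd n hn
  omega

lemma anti_eventually_const {f : ℕ → ℕ} {N : ℕ}
    (hanti : ∀ n, N ≤ n → f (n+1) ≤ f n) :
    ∃ N', N ≤ N' ∧ ∀ n, N' ≤ n → f n = f N' := by
  have hchain : ∀ a b, N ≤ a → a ≤ b → f b ≤ f a := by
    intro a b ha hab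
    induction b, hab using Nat.le_induction with
    | base => rfl
    | succ b hab ih => exact le_trans (hanti b (by omega)) ih
  by_contra hc
  push_neg at hc
  have grow : ∀ N', N ≤ N' → ∃ n, N' ≤ n ∧ f n < f N' := by
    intro N' hN'
    obtain ⟨n, hn, hne⟩ := hc N' hN'
    exact ⟨n, hn, lt_of_le_of_ne (hchain N' n hN' hn) hne⟩
  have claim : ∀ j, ∃ n, N ≤ n ∧ f n + j ≤ f N := by
    intro j
    induction j with
    | zero => exact ⟨N, le_refl N, by omega⟩
    | succ j ih =>
      obtain ⟨n, hn, hj⟩ := ih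
      obtain ⟨n', hn', hlt⟩ := grow n hn
      have hch := hchain N n (le_refl N) hn
      have hch2 := hchain n n' hn hn'
      exact ⟨n', by omega, by omega⟩
  obtain ⟨n, hn, hj⟩ := claim (f N + 1)
  omega

lemma two_step_eventually_const {f : ℕ → ℕ} {N : ℕ}
    (h : ∀ n, N ≤ n → f (n+2) ≤ f n) :
    ∃ N', N ≤ N' ∧ ∀ n, N' ≤ n → f (n+2) = f n := by
  have h0 : ∀ m, (0:ℕ) ≤ m → (fun m => f (N + 2*m)) (m+1) ≤ (fun m => f (N + 2*m)) m := by
    intro m _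
    show f (N + 2*(m+1)) ≤ f (N + 2*m)
    rw [show N + 2*(m+1) = (N + 2*m) + 2 by ring]
    exact h (N + 2*m) (by omega)
  have h1 : ∀ m, (0:ℕ) ≤ m →
      (fun m => f (N+1 + 2*m)) (m+1) ≤ (fun m => f (N+1 + 2*m)) m := by
    intro m _
    show f (N+1 + 2*(m+1)) ≤ f (N+1 + 2*m)
    rw [show N+1 + 2*(m+1) = (N+1 + 2*m) + 2 by ring]
    exact h (N+1 + 2*m) (by omega)
  obtain ⟨M0, _, hc0⟩ := anti_eventually_const (f := fun m => f (N + 2*m)) (N := 0) h0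
  obtain ⟨M1, _, hc1⟩ := anti_eventually_const (f := fun m => f (N+1 + 2*m)) (N := 0) h1
  refine ⟨N + 2 * (max M0 M1) + 2, by omega, ?_⟩
  intro n hn
  rcases Nat.even_or_odd (n - N) with ⟨m, hm⟩ | ⟨m, hm⟩
  · have hn' : n = N + 2 * m := by omega
    have e1 : f n = (fun m => f (N + 2*m)) m := by rw [hn']
    have e2 : f (n+2) = (fun m => f (N + 2*m)) (m+1) := by
      show f (n+2) = f (N + 2*(m+1))
      rw [show N + 2*(m+1) = n + 2 by omega]
    rw [e1, e2]
    show f (N + 2*(m+1)) = f (N + 2*m)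
    rw [hc0 (m+1) (by omega), hc0 m (by omega)]
  · have hn' : n = N + 1 + 2 * m := by omega
    have e1 : f n = (fun m => f (N+1 + 2*m)) m := by rw [hn']
    have e2 : f (n+2) = (fun m => f (N+1 + 2*m)) (m+1) := by
      show f (n+2) = f (N+1 + 2*(m+1))
      rw [show N+1 + 2*(m+1) = n + 2 by omega]
    rw [e1, e2]
    show f (N+1 + 2*(m+1)) = f (N+1 + 2*m)
    rw [hc1 (m+1) (by omega), hc1 m (by omega)]


/-! ### Recurrence basics -/

def Occ (u : ℕ → A) (w : List A) : Set ℕ := {i | OccursAt u w i}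

lemma occursInf_iff {u : ℕ → A} {w : List A} : OccursInf u w ↔ (Occ u w).Infinite :=
  Iff.rfl

lemma mem_lang_of_occursInf {u : ℕ → A} {w : List A} (h : OccursInf u w) : w ∈ Lang u := by
  obtain ⟨i, hi⟩ := h.nonempty
  exact ⟨i, hi⟩

lemma occ_mono_prefix {u : ℕ → A} {w x : List A} (h : w <+: x) : Occ u x ⊆ Occ u w :=
  fun _ hi => occursAt_prefix h hi

lemma occursInf_of_prefix {u : ℕ → A} {w x : List A} (h : w <+: x) (hx : OccursInf u x) :
    OccursInf u w := hx.mono (occ_mono_prefix h)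

lemma exists_recurrent_ext {u : ℕ → A} [Finite A] {w : List A} (h : OccursInf u w) :
    ∃ a, OccursInf u (w ++ [a]) := by
  by_contra hc
  push_neg at hc
  apply (Set.finite_iUnion (f := fun a : A => Occ u (w ++ [a]))
    (fun a => Set.not_infinite.mp (hc a))).subset ?_ |>.not_infinite h
  intro i hi
  refine Set.mem_iUnion.mpr ⟨u (i + w.length), ?_⟩
  exact occursAt_append_singleton.mpr ⟨hi, rfl⟩

lemma transient_bound {u : ℕ → A} {w : List A} (h : ¬ OccursInf u w) :
    ∃ M, ∀ i, M ≤ i → ¬ OccursAt u w i := by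
  have hfin : (Occ u w).Finite := Set.not_infinite.mp h
  obtain ⟨b, hb⟩ := hfin.bddAbove
  exact ⟨b + 1, fun i hi hocc => by have := hb hocc; omega⟩

/-- Key structural lemma: in a quasi-Sturmian range, a transient factor has
transient `dropLast`. -/
lemma transient_dropLast (u : ℕ → A) [Finite A] {n : ℕ}
    (hC : factorComplexity u (n+1) = factorComplexity u n + 1)
    (hnotEP : ¬ EventuallyPeriodic u)
    {v : List A} (hv : v ∈ LangN u (n+1)) (hvt : ¬ OccursInf u v) :
    ¬ OccursInf u v.dropLast := by
  intro hrec
  have hvne : v ≠ [] := by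
    intro h
    rw [h] at hv
    simpa using hv.1
  set w := v.dropLast with hw
  set a := v.getLast hvne with ha
  have hva : w ++ [a] = v := List.dropLast_append_getLast hvne
  have hwlen : w.length = n := by
    rw [hw, List.length_dropLast, hv.1]
    omega
  obtain ⟨b, hb⟩ := exists_recurrent_ext hrec
  have hab : a ≠ b := by
    intro h
    rw [← h, hva] at hb
    exact hvt hb
  have hmema : w ++ [a] ∈ Lang u := hva ▸ hv.2
  have hmemb : w ++ [b] ∈ Lang u := mem_lang_of_occursInf hb
  obtain ⟨hext, huniq⟩ := rs_structure u hC hwlen hab hmema hmemb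
  obtain ⟨M, hM⟩ := transient_bound hvt
  apply hnotEP
  apply ep_of_det u (M := M) (n := n)
  intro i j hi hj hwin
  by_contra hne
  have hxi : factorAt u n i ++ [u (i+n)] ∈ Lang u := by
    rw [← factorAt_succ_right]
    exact factorAt_mem_lang u (n+1) i
  have hxj : factorAt u n i ++ [u (j+n)] ∈ Lang u := by
    rw [hwin, ← factorAt_succ_right]
    exact factorAt_mem_lang u (n+1) j
  have hxw : factorAt u n i = w :=
    huniq _ (u (i+n)) (u (j+n)) (factorAt_length u n i) hne hxi hxj
  have hocca : ∀ m, M ≤ m → factorAt u n i = factorAt u n m → u (m + n) ≠ a := by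
    intro m hm hxm heq
    apply hM m hm
    rw [occursAt_iff_eq u (n := n + 1) hv.1, ← hva, ← hxw, hxm,
      factorAt_succ_right, heq]
  have hia : u (i + n) = b := by
    rcases hext (u (i+n)) (by rw [← hxw]; exact hxi) with h | h
    · exact absurd h (hocca i hi rfl)
    · exact h
  have hja : u (j + n) = b := by
    rcases hext (u (j+n)) (by rw [← hxw]; exact hxj) with h | h
    · exact absurd h (hocca j hj hwin)
    · exact h
  exact hne (hia.trans hja.symm)

/-- There is a suffix all of whose factors are recurrent. -/
lemma exists_recurrent_suffix (u : ℕ → A) [Finite A] {n₁ c : ℕ}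
    (hQS : ∀ n, n₁ ≤ n → factorComplexity u n = n + c)
    (hnotEP : ¬ EventuallyPeriodic u) :
    ∃ k₀, (∀ w ∈ Lang (fun j => u (j + k₀)), OccursInf u w) ∧
        (∀ w ∈ Lang (fun j => u (j + k₀)), OccursInf (fun j => u (j + k₀)) w) := by
  classical
  set TTs : Set (List A) := {w ∈ LangN u n₁ | ¬ OccursInf u w} with hTTs
  have hTfin : TTs.Finite := (finite_langN u n₁).subset (fun w hw => hw.1)
  have hUfin : (⋃ w ∈ TTs, Occ u w).Finite :=
    hTfin.biUnion (fun w hw => Set.not_infinite.mp hw.2)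
  obtain ⟨bU, hbU⟩ := hUfin.bddAbove
  set k₀ := bU + 1 with hk₀
  have hU : ∀ w ∈ TTs, ∀ i ∈ Occ u w, i < k₀ := by
    intro w hw i hi
    have : i ∈ ⋃ w ∈ TTs, Occ u w := Set.mem_biUnion hw hi
    have := hbU this
    omega
  have claim : ∀ n, n₁ ≤ n → ∀ i, k₀ ≤ i → OccursInf u (factorAt u n i) := by
    intro n hn
    induction n, hn using Nat.le_induction with
    | base =>
      intro i hi
      by_contra hnt
      have hmem : factorAt u n₁ i ∈ TTs := ⟨factorAt_mem_langN u n₁ i, hnt⟩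
      have := hU _ hmem i (occursAt_factorAt u n₁ i)
      omega
    | succ n hn ih =>
      intro i hi
      by_contra hnt
      have hC : factorComplexity u (n+1) = factorComplexity u n + 1 := by
        rw [hQS (n+1) (by omega), hQS n hn]
        omega
      have := transient_dropLast u hC hnotEP (factorAt_mem_langN u (n+1) i) hnt
      rw [factorAt_dropLast] at this
      exact this (ih i hi)
  have hrecU : ∀ w ∈ Lang (fun j => u (j + k₀)), OccursInf u w := by
    intro w hw
    obtain ⟨i, hik, hocc⟩ := mem_lang_shift_iff.mp hw
    have hik' : k₀ ≤ i := hik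
    set W := factorAt u (max n₁ w.length) i with hW
    have hWrec : OccursInf u W := claim _ (le_max_left _ _) i hik'
    apply occursInf_of_prefix ?_ hWrec
    rw [occursAt_iff_eq u rfl] at hocc
    rw [hocc, hW, ← factorAt_take u i (le_max_right n₁ w.length)]
    exact List.take_prefix _ _
  refine ⟨k₀, hrecU, ?_⟩
  intro w hw
  have hinf : (Occ u w).Infinite := hrecU w hw
  have hs : (Occ u w \ Set.Iio k₀).Infinite := hinf.diff (Set.finite_Iio k₀)
  have hsub : Occ u w \ Set.Iio k₀ ⊆ Set.range (fun j => j + k₀) := by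
    rintro i ⟨_, hi2⟩
    simp only [Set.mem_Iio, not_lt] at hi2
    refine ⟨i - k₀, ?_⟩
    show i - k₀ + k₀ = i
    omega
  have hpre := hs.preimage hsub
  apply hpre.mono
  intro j hj
  simp only [Set.mem_preimage, Set.mem_diff, Set.mem_setOf_eq] at hj
  show OccursAt (fun j => u (j + k₀)) w j
  rw [occursAt_shift]
  exact hj.1

/-! ### The propagation argument -/

lemma factor_of_sym {u : ℕ → A} {w x : List A} (h : w <:+: x)
    (hx : x.reverse ∈ Lang u) : w.reverse ∈ Lang u :=
  infix_mem_lang (List.reverse_infix.mpr h) hx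

lemma asym_prefix_closure {v : ℕ → A} [Finite A] {M : ℕ}
    (hq : qCount v (M+1) = qCount v M) :
    ∀ x ∈ AsymSet v (M+1), x.dropLast ∈ AsymSet v M := by
  have hsub : (rext v) '' AsymSet v M ⊆ AsymSet v (M+1) :=
    fun x ⟨w, hw, hxw⟩ => hxw ▸ rext_maps hw
  have heq : (rext v) '' AsymSet v M = AsymSet v (M+1) := by
    apply Set.eq_of_subset_of_ncard_le hsub ?_ (asymSet_finite v (M+1))
    rw [Set.ncard_image_of_injOn rext_injOn]
    exact le_of_eq hq
  intro x hx
  rw [← heq] at hx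
  obtain ⟨w, hw, hxw⟩ := hx
  have : x.dropLast = w := by
    rw [← hxw, (rext_spec hw.1.2).1]
    exact List.dropLast_concat
  rw [this]
  exact hw

/-- A recurrent sequence with eventually affine complexity and eventually constant
asymmetry count has reversal-closed language. -/
lemma revClosed_of_recurrent (v : ℕ → A) [Finite A]
    (hrec : ∀ w ∈ Lang v, OccursInf v w)
    {n₂ cv : ℕ} (hCv : ∀ n, n₂ ≤ n → factorComplexity v n = n + cv)
    (hq : ∀ n, n₂ ≤ n → qCount v n = qCount v n₂) :
    ∀ w ∈ Lang v, w.reverse ∈ Lang v := by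
  have hqc : qCount v (n₂+1) = qCount v n₂ := by
    rw [hq (n₂+1) (by omega)]
  have hpc := asym_prefix_closure hqc
  -- a palindrome of length ≥ M
  have hpal : ∃ npal, n₂ ≤ npal ∧ (PalSet v npal).Nonempty := by
    have hfind : ∃ npal, n₂ ≤ npal ∧ (npal + cv + qCount v n₂) % 2 = 1 := by
      rcases Nat.even_or_odd (n₂ + cv + qCount v n₂) with he | ho
      · exact ⟨n₂ + 1, by omega, by obtain ⟨t, ht⟩ := he; omega⟩
      · exact ⟨n₂, le_refl n₂, by obtain ⟨t, ht⟩ := ho; omega⟩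
    obtain ⟨npal, hnp, hodd⟩ := hfind
    refine ⟨npal, hnp, ?_⟩
    apply Set.nonempty_of_ncard_ne_zero
    have hpar := parity_sCount v npal
    rw [sCount_split, hCv npal hnp, hq npal hnp] at hpar
    rw [palComplexity_eq] at hpar
    omega
  obtain ⟨npal, hnp, π, hπ⟩ := hpal
  obtain ⟨p₀, hocc⟩ := hπ.1.2
  rw [occursAt_iff_eq v hπ.1.1] at hocc
  have hprop : ∀ d, (factorAt v n₂ (p₀ + d)).reverse ∈ Lang v := by
    intro d
    induction d with
    | zero =>
      have h1 : factorAt v n₂ (p₀ + 0) = π.take n₂ := by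
        rw [Nat.add_zero, ← factorAt_take v p₀ hnp, ← hocc]
      rw [h1]
      apply factor_of_sym (List.take_prefix n₂ π).isInfix
      rw [hπ.2]
      exact hπ.1.2
    | succ d ih =>
      set h := factorAt v (n₂+1) (p₀ + d) with hh
      by_cases hrev : h.reverse ∈ Lang v
      · have hg : factorAt v n₂ (p₀ + d + 1) = h.tail := by
          rw [hh, factorAt_tail]
        show (factorAt v n₂ (p₀ + d + 1)).reverse ∈ Lang v
        rw [hg]
        exact factor_of_sym (List.tail_suffix h).isInfix hrev
      · exfalso
        have hmem : h ∈ AsymSet v (n₂+1) :=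
          ⟨factorAt_mem_langN v (n₂+1) (p₀+d), hrev⟩
        have := hpc h hmem
        rw [hh, factorAt_dropLast] at this
        exact this.2 ih
  have hq0 : qCount v n₂ = 0 := by
    rw [qCount, Set.ncard_eq_zero (asymSet_finite v n₂)]
    by_contra hne
    obtain ⟨w, hw⟩ := Set.nonempty_iff_ne_empty.mpr hne
    have hinf : (Occ v w).Infinite := hrec w hw.1.2
    obtain ⟨i, hi, hip⟩ := hinf.exists_gt p₀
    have : w = factorAt v n₂ i := by
      rw [← occursAt_iff_eq v hw.1.1]
      exact hi
    have hd : i = p₀ + (i - p₀) := by omega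
    apply hw.2
    rw [this, hd]
    exact hprop (i - p₀)
  have hqall : ∀ n, qCount v n = 0 := by
    intro n
    rcases le_or_gt n n₂ with h | h
    · have := qCount_mono_le v h
      omega
    · have := hq n (by omega)
      omega
  intro w hw
  by_contra hc
  have hmem : w ∈ AsymSet v w.length := ⟨⟨rfl, hw⟩, hc⟩
  have := hqall w.length
  rw [qCount, Set.ncard_eq_zero (asymSet_finite v _)] at this
  rw [this] at hmem
  exact hmem


/-! ### Suffixes: extras counting -/

lemma ep_shift {u : ℕ → A} {k : ℕ} (h : EventuallyPeriodic (fun j => u (j + k))) :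
    EventuallyPeriodic u := by
  obtain ⟨Nv, p, hp, hper⟩ := h
  refine ⟨Nv + k, p, hp, ?_⟩
  intro i hi
  have h2 := hper (i - k) (by omega)
  have e1 : i - k + p + k = i + p := by omega
  have e2 : i - k + k = i := by omega
  calc u (i + p) = u (i - k + p + k) := by rw [e1]
    _ = u (i - k + k) := h2
    _ = u i := by rw [e2]

lemma w_prefix_rext {u : ℕ → A} {w : List A} (h : w ∈ Lang u) : w <+: rext u w := by
  rw [(rext_spec h).1]
  exact ⟨[u (Classical.choose h + w.length)], rfl⟩

lemma rext_injOn_len {u : ℕ → A} {n : ℕ} {S : Set (List A)}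
    (hS : ∀ w ∈ S, w.length = n ∧ w ∈ Lang u) : Set.InjOn (rext u) S := by
  intro w hw w' hw' heq
  have h1 := rext_take (hS w hw).2
  have h2 := rext_take (hS w' hw').2
  rw [(hS w hw).1] at h1
  rw [(hS w' hw').1] at h2
  rw [← h1, ← h2, heq]

def ExtraSet (u : ℕ → A) (k n : ℕ) : Set (List A) :=
  {w ∈ LangN u n | w ∉ Lang (fun j => u (j + k))}

noncomputable def eCount (u : ℕ → A) (k n : ℕ) : ℕ := (ExtraSet u k n).ncard

lemma extraSet_finite (u : ℕ → A) [Finite A] (k n : ℕ) : (ExtraSet u k n).Finite :=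
  (finite_langN u n).subset (fun w hw => hw.1)

lemma extra_occ_lt {u : ℕ → A} {k n i : ℕ} {w : List A} (hw : w ∈ ExtraSet u k n)
    (hocc : OccursAt u w i) : i < k := by
  by_contra hik
  exact hw.2 (mem_lang_shift_iff.mpr ⟨i, by omega, hocc⟩)

lemma complexity_split (u : ℕ → A) [Finite A] (k n : ℕ) :
    factorComplexity u n = factorComplexity (fun j => u (j + k)) n + eCount u k n := by
  have hsub : Lang (fun j => u (j + k)) ⊆ Lang u := lang_shift_subset u k
  have hunion : LangN u n = LangN (fun j => u (j + k)) n ∪ ExtraSet u k n := by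
    ext w
    constructor
    · intro hw
      by_cases h : w ∈ Lang (fun j => u (j + k))
      · exact Or.inl ⟨hw.1, h⟩
      · exact Or.inr ⟨hw, h⟩
    · rintro (hw | hw)
      · exact ⟨hw.1, hsub hw.2⟩
      · exact hw.1
  have hdisj : Disjoint (LangN (fun j => u (j + k)) n) (ExtraSet u k n) := by
    rw [Set.disjoint_left]
    rintro w hw hw'
    exact hw'.2 hw.2
  rw [factorComplexity, hunion,
    Set.ncard_union_eq hdisj (finite_langN _ n) (extraSet_finite u k n)]
  rfl

lemma eCount_mono (u : ℕ → A) [Finite A] (k n : ℕ) : eCount u k n ≤ eCount u k (n+1) := by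
  apply Set.ncard_le_ncard_of_injOn (rext u) ?_
    (rext_injOn_len (fun w hw => ⟨hw.1.1, hw.1.2⟩)) (extraSet_finite u k (n+1))
  intro w hw
  have hwl : w ∈ Lang u := hw.1.2
  refine ⟨⟨by rw [rext_length hwl, hw.1.1], (rext_spec hwl).2⟩, ?_⟩
  intro hmem
  obtain ⟨i, hik, hocc⟩ := mem_lang_shift_iff.mp hmem
  have : OccursAt u w i := occursAt_prefix (w_prefix_rext hwl) hocc
  exact absurd (extra_occ_lt hw this) (by omega)

lemma eCount_le (u : ℕ → A) [Finite A] (k n : ℕ) : eCount u k n ≤ k := by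
  classical
  set f : List A → ℕ := fun w => if hw : w ∈ Lang u then Classical.choose hw else 0 with hf
  have : eCount u k n ≤ ((Finset.range k : Finset ℕ) : Set ℕ).ncard := by
    apply Set.ncard_le_ncard_of_injOn f
    · intro w hw
      have hocc := Classical.choose_spec hw.1.2
      simp only [hf, dif_pos hw.1.2, Finset.coe_range, Set.mem_Iio]
      exact extra_occ_lt hw hocc
    · intro w hw w' hw' heq
      simp only [hf, dif_pos hw.1.2, dif_pos hw'.1.2] at heq
      have h1 := Classical.choose_spec hw.1.2
      have h2 := Classical.choose_spec hw'.1.2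
      rw [occursAt_iff_eq u hw.1.1] at h1
      rw [occursAt_iff_eq u hw'.1.1] at h2
      exact h1.trans ((congrArg (factorAt u n) heq).trans h2.symm)
  rwa [Set.ncard_coe_finset, Finset.card_range] at this

lemma qCount_le_sCount (u : ℕ → A) [Finite A] (n : ℕ) : qCount u n ≤ sCount u n :=
  Set.ncard_le_ncard (fun w hw => ⟨hw.1, Or.inr hw.2⟩)
    ((finite_langN u n).subset (fun w hw => hw.1))

lemma qCount_shift_bound (u : ℕ → A) [Finite A] (k n : ℕ) :
    qCount (fun j => u (j + k)) n ≤ qCount u n + k := by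
  classical
  set v : ℕ → A := fun j => u (j + k) with hv
  set S2 : Set (List A) := {w ∈ LangN v n | w.reverse ∈ Lang u ∧ w.reverse ∉ Lang v}
    with hS2
  have hsub : AsymSet v n ⊆ AsymSet u n ∪ S2 := by
    intro w hw
    by_cases h : w.reverse ∈ Lang u
    · exact Or.inr ⟨hw.1, h, hw.2⟩
    · exact Or.inl ⟨⟨hw.1.1, lang_shift_subset u k hw.1.2⟩, h⟩
  have hS2card : S2.ncard ≤ k := by
    set f : List A → ℕ :=
      fun w => if hw : w.reverse ∈ Lang u then Classical.choose hw else 0 with hf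
    have : S2.ncard ≤ ((Finset.range k : Finset ℕ) : Set ℕ).ncard := by
      apply Set.ncard_le_ncard_of_injOn f
      · intro w hw
        have hocc := Classical.choose_spec hw.2.1
        simp only [hf, dif_pos hw.2.1, Finset.coe_range, Set.mem_Iio]
        by_contra hik
        exact hw.2.2 (mem_lang_shift_iff.mpr ⟨_, by omega, hocc⟩)
      · intro w hw w' hw' heq
        simp only [hf, dif_pos hw.2.1, dif_pos hw'.2.1] at heq
        have h1 := Classical.choose_spec hw.2.1
        have h2 := Classical.choose_spec hw'.2.1
        rw [occursAt_iff_eq u (n := n) (by simp [hw.1.1])] at h1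
        rw [occursAt_iff_eq u (n := n) (by simp [hw'.1.1])] at h2
        apply List.reverse_injective
        exact h1.trans ((congrArg (factorAt u n) heq).trans h2.symm)
    rwa [Set.ncard_coe_finset, Finset.card_range] at this
  have hfinU : (AsymSet u n ∪ S2).Finite :=
    (asymSet_finite u n).union ((finite_langN v n).subset (fun w hw => hw.1))
  calc qCount v n ≤ (AsymSet u n ∪ S2).ncard := Set.ncard_le_ncard hsub hfinU
    _ ≤ (AsymSet u n).ncard + S2.ncard := Set.ncard_union_le _ _
    _ ≤ qCount u n + k := by
        have := hS2card
        rw [qCount]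
        omega

/-! ### The forward direction -/

lemma forward_dir (u : ℕ → A) [Finite A] {N : ℕ}
    (hyp : ∀ n, N ≤ n → reflComplexity u (n + 2) = reflComplexity u n + 1) :
    QuasiSturmian u ∧
      ∃ k : ℕ, ∀ w ∈ Lang (fun i => u (i + k)), w.reverse ∈ Lang (fun i => u (i + k)) := by
  -- reflection complexity along parities
  have hrpar : ∀ b, ∀ m, reflComplexity u (N + b + 2*m) = reflComplexity u (N + b) + m := by
    intro b m
    induction m with
    | zero => simp
    | succ m ih =>
      rw [show N + b + 2*(m+1) = (N + b + 2*m) + 2 by ring, hyp _ (by omega), ih]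
      ring
  -- u is not eventually periodic
  have hnotEP : ¬ EventuallyPeriodic u := by
    intro hEP
    obtain ⟨B, hB⟩ := complexity_bdd_of_ep u hEP
    have h1 := hrpar 0 (B + 1)
    have h2 := refl_le_factor u (N + 0 + 2*(B+1))
    have h3 := hB (N + 0 + 2*(B+1))
    omega
  have hstrict : ∀ n, factorComplexity u n + 1 ≤ factorComplexity u (n+1) := by
    intro n
    have hm := factorComplexity_mono u n
    rcases Nat.eq_or_lt_of_le hm with h | h
    · exact absurd (ep_of_complexity_eq u h.symm) hnotEP
    · omega
  have hlow : ∀ n, n + 1 ≤ factorComplexity u n := by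
    intro n
    induction n with
    | zero => rw [factorComplexity_zero]
    | succ n ih => have := hstrict n; omega
  have hupper : ∀ n, N ≤ n →
      factorComplexity u n ≤ n + (2*reflComplexity u N + 2*reflComplexity u (N+1)) := by
    intro n hn
    obtain ⟨b, m, hb, hnbm⟩ : ∃ b m, b ≤ 1 ∧ n = N + b + 2*m :=
      ⟨(n-N)%2, (n-N)/2, by omega, by omega⟩
    have hr := hrpar b m
    have h2r := two_mul_reflComplexity u n
    rw [← hnbm] at hr
    interval_cases b
    · have e0 : N + 0 = N := rfl
      rw [e0] at hr
      omega
    · omega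
  -- quasi-Sturmian
  have hmono' : ∀ n, N ≤ n →
      factorComplexity u n - n ≤ factorComplexity u (n+1) - (n+1) := by
    intro n _
    have := hstrict n
    have := hlow n
    omega
  obtain ⟨N₁, hN₁, hconst⟩ := mono_bdd_eventually_const
    (f := fun n => factorComplexity u n - n)
    (B := 2*reflComplexity u N + 2*reflComplexity u (N+1)) hmono' (fun n hn => by
      have := hupper n hn
      omega)
  set c : ℕ := factorComplexity u N₁ - N₁ with hc
  have hQS : ∀ n, N₁ ≤ n → factorComplexity u n = n + c := by
    intro n hn
    have h1 := hconst n hn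
    have h2 := hlow n
    have h3 := hlow N₁
    omega
  have hQSu : QuasiSturmian u := ⟨N₁, c, hQS⟩
  refine ⟨hQSu, ?_⟩
  -- sCount is bounded
  have hs2 : ∀ n, max N N₁ ≤ n → sCount u (n+2) = sCount u n := by
    intro n hn
    have h1 := two_mul_reflComplexity u (n+2)
    have h2 := two_mul_reflComplexity u n
    have h3 := hyp n (le_trans (le_max_left _ _) hn)
    have h4 := hQS (n+2) (by omega)
    have h5 := hQS n (le_trans (le_max_right _ _) hn)
    omega
  set K : ℕ := max N N₁ with hK
  have hspar : ∀ b, b ≤ 1 → ∀ m, sCount u (K + b + 2*m) = sCount u (K + b) := by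
    intro b hb m
    induction m with
    | zero => simp
    | succ m ih =>
      rw [show K + b + 2*(m+1) = (K + b + 2*m) + 2 by ring, hs2 _ (by omega), ih]
  have hqbound : ∀ n, qCount u n ≤ sCount u K + sCount u (K+1) := by
    intro n
    rcases le_or_gt n (K+1) with h | h
    · have h1 := qCount_mono_le u h
      have h2 := qCount_le_sCount u (K+1)
      have h3 := hspar 1 (by omega) 0
      omega
    · obtain ⟨b, m, hb, hnbm⟩ : ∃ b m, b ≤ 1 ∧ n = K + b + 2*m :=
        ⟨(n-K)%2, (n-K)/2, by omega, by omega⟩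
      have h1 := qCount_le_sCount u n
      have h2 := hspar b hb m
      rw [← hnbm] at h2
      interval_cases b
      · have e0 : K + 0 = K := rfl
        rw [e0] at h2
        omega
      · omega
  -- the recurrent suffix
  obtain ⟨k₀, hrecU, hrecV⟩ := exists_recurrent_suffix u hQS hnotEP
  set v : ℕ → A := fun j => u (j + k₀) with hv
  have hnotEPv : ¬ EventuallyPeriodic v := fun h => hnotEP (ep_shift h)
  have hstrictv : ∀ n, factorComplexity v n + 1 ≤ factorComplexity v (n+1) := by
    intro n
    have hm := factorComplexity_mono v n
    rcases Nat.eq_or_lt_of_le hm with h | h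
    · exact absurd (ep_of_complexity_eq v h.symm) hnotEPv
    · omega
  have hlowv : ∀ n, n + 1 ≤ factorComplexity v n := by
    intro n
    induction n with
    | zero => rw [factorComplexity_zero]
    | succ n ih => have := hstrictv n; omega
  -- complexity of the suffix
  obtain ⟨N₅, _, heconst⟩ := mono_bdd_eventually_const (N := 0)
    (f := eCount u k₀) (fun n _ => eCount_mono u k₀ n) (fun n _ => eCount_le u k₀ n)
  set K₂ : ℕ := max N₁ N₅ with hK₂
  set cv : ℕ := factorComplexity v K₂ - K₂ with hcv
  have hCv : ∀ n, K₂ ≤ n → factorComplexity v n = n + cv := by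
    intro n hn
    have h1 := complexity_split u k₀ n
    have h2 := complexity_split u k₀ K₂
    rw [← hv] at h1 h2
    have h3 := hQS n (le_trans (le_max_left _ _) hn)
    have h4 := hQS K₂ (le_max_left _ _)
    have h5 := heconst n (by omega)
    have h6 := heconst K₂ (by omega)
    have h7 := hlowv K₂
    have h8 := hlowv n
    omega
  -- qCount of the suffix is bounded, hence eventually constant
  have hqvb : ∀ n, qCount v n ≤ (sCount u K + sCount u (K+1)) + k₀ := by
    intro n
    have h1 := qCount_shift_bound u k₀ n
    rw [← hv] at h1
    have h2 := hqbound n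
    omega
  obtain ⟨n₆, _, hqvconst⟩ := mono_bdd_eventually_const (N := 0)
    (f := qCount v) (fun n _ => qCount_mono v n) (fun n _ => hqvb n)
  set n₂ : ℕ := max K₂ n₆ with hn₂
  have hq' : ∀ n, n₂ ≤ n → qCount v n = qCount v n₂ := by
    intro n hn
    rw [hqvconst n (by omega), hqvconst n₂ (by omega)]
  have hCv' : ∀ n, n₂ ≤ n → factorComplexity v n = n + cv := by
    intro n hn
    exact hCv n (le_trans (le_max_left _ _) hn)
  exact ⟨k₀, revClosed_of_recurrent v hrecV hCv' hq'⟩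


/-! ### Mirror occurrences and recurrence from reversal-closure -/

lemma reverse_window' (a b c : List A) :
    List.take b.length (List.drop c.length (a ++ (b ++ c)).reverse) = b.reverse := by
  rw [List.reverse_append, List.reverse_append, List.append_assoc]
  apply take_drop_append
  · rw [List.length_reverse]
  · rw [List.length_reverse]

lemma reverse_window (W : List A) {t n : ℕ} (h : t + n ≤ W.length) :
    List.take n (List.drop (W.length - t - n) W.reverse)
      = ((W.drop t).take n).reverse := by
  have h1 := reverse_window' (W.take t) ((W.drop t).take n) ((W.drop t).drop n)
  rw [List.take_append_drop, List.take_append_drop] at h1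
  have e1 : ((W.drop t).take n).length = n := by
    rw [List.length_take, List.length_drop]
    omega
  have e2 : ((W.drop t).drop n).length = W.length - t - n := by
    rw [List.length_drop, List.length_drop]
  rw [e1, e2] at h1
  exact h1

lemma rev_occurs {x : ℕ → A} (hcl : ∀ w ∈ Lang x, w.reverse ∈ Lang x)
    {w : List A} {i : ℕ} (hocc : OccursAt x w i) (M : ℕ) :
    ∃ j, M ≤ j ∧ OccursAt x w.reverse j := by
  set n := w.length with hn
  set L := i + n + M with hL
  set W := factorAt x L 0 with hW
  have hWlen : W.length = L := factorAt_length x L 0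
  have hw : w = (W.drop i).take n := by
    have hwin := factorAt_window x (t := i) (n := n) (L := L) 0 (by omega)
    rw [occursAt_iff_eq x rfl] at hocc
    rw [hocc]
    simpa using hwin
  have hWrev : W.reverse ∈ Lang x := hcl W (factorAt_mem_lang x L 0)
  obtain ⟨j, hjocc⟩ := hWrev
  have hlenrev : W.reverse.length = L := by rw [List.length_reverse, hWlen]
  rw [occursAt_iff_eq x hlenrev] at hjocc
  refine ⟨j + (L - i - n), by omega, ?_⟩
  rw [occursAt_iff_eq x (n := n) (by rw [List.length_reverse])]
  have hwin2 := factorAt_window x (t := L - i - n) (n := n) (L := L) j (by omega)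
  rw [hwin2, ← hjocc]
  have hrw := reverse_window W (t := i) (n := n) (by omega)
  rw [hWlen] at hrw
  rw [hrw, ← hw]

lemma recurrent_of_revClosed (x : ℕ → A) (hcl : ∀ w ∈ Lang x, w.reverse ∈ Lang x) :
    ∀ w ∈ Lang x, OccursInf x w := by
  intro w hw
  apply Set.infinite_of_not_bddAbove
  rintro ⟨b, hb⟩
  obtain ⟨i, hocc⟩ := hcl w hw
  obtain ⟨j, hjM, hjocc⟩ := rev_occurs hcl hocc (b + 1)
  rw [List.reverse_reverse] at hjocc
  have : j ≤ b := hb hjocc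
  omega

/-! ### Left-extension fibers -/

open Classical in
lemma card_fiber_left (x : ℕ → A) [Finite A] (n : ℕ) :
    factorComplexity x (n+1)
      = ∑ w ∈ FL x n, ((FL x (n+1)).filter (fun v => v.tail = w)).card := by
  rw [← card_FL]
  apply Finset.card_eq_sum_card_fiberwise
  intro v hv
  obtain ⟨hl, i, hocc⟩ := mem_langN_iff.mp (mem_FL.mp hv)
  rw [Finset.mem_coe, mem_FL, hocc, factorAt_tail]
  exact factorAt_mem_langN x n (i+1)

open Classical in
lemma fiber_left_nonempty (x : ℕ → A) [Finite A]
    (hrec : ∀ w ∈ Lang x, OccursInf x w) {n : ℕ} {w : List A} (hw : w ∈ FL x n) :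
    1 ≤ ((FL x (n+1)).filter (fun v => v.tail = w)).card := by
  obtain ⟨hl, hmem⟩ := mem_FL.mp hw
  obtain ⟨j, hj, hj0⟩ := (hrec w hmem).exists_gt 0
  refine Finset.card_pos.mpr ⟨factorAt x (n+1) (j-1), Finset.mem_filter.mpr
    ⟨mem_FL.mpr (factorAt_mem_langN x (n+1) (j-1)), ?_⟩⟩
  rw [factorAt_tail]
  have he : j - 1 + 1 = j := by omega
  rw [he]
  have hj' : OccursAt x w j := hj
  rw [occursAt_iff_eq x hl] at hj'
  exact hj'.symm

open Classical in
lemma mem_fiber_left {x : ℕ → A} [Finite A] {n : ℕ} {w : List A} {a : A}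
    (hl : w.length = n) (hmem : a :: w ∈ Lang x) :
    a :: w ∈ (FL x (n+1)).filter (fun v => v.tail = w) :=
  Finset.mem_filter.mpr ⟨mem_FL.mpr ⟨by simp [hl], hmem⟩, rfl⟩

/-! ### Palindromes -/

open Classical in
lemma palComplexity_eq_card (x : ℕ → A) [Finite A] (n : ℕ) :
    palComplexity x n = ((FL x n).filter (fun w => w.reverse = w)).card := by
  rw [palComplexity, ← Set.ncard_coe_finset]
  congr 1
  ext w
  simp only [Finset.coe_filter, Set.mem_setOf_eq, mem_FL]

lemma pal_decomp {π : List A} {n : ℕ} (h2 : π.length = n + 2) (hp : π.reverse = π) :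
    ∃ (a : A) (w : List A), π = (a :: w) ++ [a] ∧ w.reverse = w ∧ w.length = n := by
  have hne : π ≠ [] := by
    intro h
    rw [h] at h2
    simp at h2
  obtain ⟨a, t, rfl⟩ := List.exists_cons_of_ne_nil hne
  have htne : t ≠ [] := by
    intro h
    rw [h] at h2
    simp at h2
  obtain ⟨w, b, hwb⟩ : ∃ w b, t = w ++ [b] :=
    ⟨t.dropLast, t.getLast htne, (List.dropLast_append_getLast htne).symm⟩
  subst hwb
  have hrev : (a :: (w ++ [b])).reverse = b :: (w.reverse ++ [a]) := by
    simp
  rw [hrev] at hp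
  injection hp with h1 h2'
  subst h1
  have hw : w.reverse = w := (List.append_inj h2' (by simp)).1
  refine ⟨b, w, by simp, hw, ?_⟩
  simp only [List.length_cons, List.length_append, List.length_nil] at h2
  omega

lemma sum_le_card_add_one {β : Type*} {s : Finset β} {f : β → ℕ}
    (hle : ∀ b ∈ s, f b ≤ 2)
    (huniq : ∀ b ∈ s, ∀ b' ∈ s, b ≠ b' → 2 ≤ f b → 2 ≤ f b' → False) :
    ∑ b ∈ s, f b ≤ s.card + 1 := by
  classical
  by_cases hex : ∃ b₀ ∈ s, 2 ≤ f b₀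
  · obtain ⟨b₀, hb₀, hf₀⟩ := hex
    rw [← Finset.sum_erase_add s f hb₀]
    have h1 : ∀ b ∈ s.erase b₀, f b ≤ 1 := by
      intro b hb
      by_contra hc
      exact huniq b (Finset.mem_of_mem_erase hb) b₀ hb₀
        (Finset.ne_of_mem_erase hb) (by omega) hf₀
    have h2 : ∑ b ∈ s.erase b₀, f b ≤ (s.erase b₀).card := by
      calc ∑ b ∈ s.erase b₀, f b ≤ ∑ _b ∈ s.erase b₀, 1 := Finset.sum_le_sum h1
        _ = (s.erase b₀).card := by simp
    have h3 : (s.erase b₀).card = s.card - 1 := Finset.card_erase_of_mem hb₀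
    have h4 : 1 ≤ s.card := Finset.card_pos.mpr ⟨b₀, hb₀⟩
    have h5 := hle b₀ hb₀
    omega
  · push_neg at hex
    calc ∑ b ∈ s, f b ≤ ∑ _b ∈ s, 1 := Finset.sum_le_sum (fun b hb => by
        have := hex b hb; omega)
      _ = s.card := by simp
      _ ≤ s.card + 1 := by omega

/-- In a recurrent sequence with `C(n+1) = C(n) + 1`,
`P(n+2) ≤ P(n) + 1`. -/
lemma pal_two_step_le (x : ℕ → A) [Finite A]
    (hrec : ∀ w ∈ Lang x, OccursInf x w) {n : ℕ}
    (hC : factorComplexity x (n+1) = factorComplexity x n + 1) :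
    palComplexity x (n+2) ≤ palComplexity x n + 1 := by
  classical
  rw [palComplexity_eq_card, palComplexity_eq_card]
  set P2 := (FL x (n+2)).filter (fun w => w.reverse = w) with hP2
  set P0 := (FL x n).filter (fun w => w.reverse = w) with hP0
  set core : List A → List A := fun π => π.tail.dropLast with hcore
  have hdecomp : ∀ π ∈ P2, ∃ a w, π = (a :: w) ++ [a] ∧ w.reverse = w ∧ w.length = n
      ∧ core π = w := by
    intro π hπ
    obtain ⟨hπF, hπp⟩ := Finset.mem_filter.mp hπ
    obtain ⟨hπl, hπm⟩ := mem_FL.mp hπF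
    obtain ⟨a, w, hform, hwp, hwl⟩ := pal_decomp hπl hπp
    refine ⟨a, w, hform, hwp, hwl, ?_⟩
    rw [hcore]
    show π.tail.dropLast = w
    rw [hform, List.cons_append, List.tail_cons, List.dropLast_concat]
  have hmaps : ∀ π ∈ P2, core π ∈ P0 := by
    intro π hπ
    obtain ⟨a, w, hform, hwp, hwl, hcw⟩ := hdecomp π hπ
    obtain ⟨hπF, _⟩ := Finset.mem_filter.mp hπ
    obtain ⟨hπl, hπm⟩ := mem_FL.mp hπF
    rw [hcw]
    refine Finset.mem_filter.mpr ⟨mem_FL.mpr ⟨hwl, ?_⟩, hwp⟩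
    apply infix_mem_lang ?_ hπm
    refine ⟨[a], [a], ?_⟩
    rw [hform]
    simp
  rw [Finset.card_eq_sum_card_fiberwise hmaps]
  -- left-extension structure
  have hsuml := card_fiber_left x n
  rw [hC, ← card_FL] at hsuml
  obtain ⟨hle2, huniq⟩ := sum_eq_card_add_one
    (fun w hw => fiber_left_nonempty x hrec hw) hsuml.symm
  -- each palindromic fiber injects into the left-extension fiber
  have hfib : ∀ w ∈ P0, (P2.filter (fun π => core π = w)).card
      ≤ ((FL x (n+1)).filter (fun v => v.tail = w)).card := by
    intro w hw
    apply Finset.card_le_card_of_injOn (fun π => π.dropLast)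
    · intro π hπ
      obtain ⟨hπ2, hπc⟩ := Finset.mem_filter.mp hπ
      obtain ⟨a, w', hform, hwp, hwl, hcw⟩ := hdecomp π hπ2
      have hww : w' = w := by rw [← hcw, hπc]
      subst hww
      have hdl : π.dropLast = a :: w' := by rw [hform, List.dropLast_concat]
      have hpre : (a :: w') <+: π := by
        rw [hform]
        exact ⟨[a], rfl⟩
      simp only [Finset.mem_coe]
      rw [hdl]
      apply mem_fiber_left hwl
      exact prefix_mem_lang hpre (mem_FL.mp (Finset.mem_filter.mp hπ2).1).2
    · intro π hπ π' hπ' heq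
      simp only [Finset.mem_coe] at hπ hπ'
      obtain ⟨hπ2, hπc⟩ := Finset.mem_filter.mp hπ
      obtain ⟨hπ2', hπc'⟩ := Finset.mem_filter.mp hπ'
      obtain ⟨a, w1, hform, _, _, hcw⟩ := hdecomp π hπ2
      obtain ⟨a', w2, hform', _, _, hcw'⟩ := hdecomp π' hπ2'
      have hdl : π.dropLast = a :: w1 := by rw [hform, List.dropLast_concat]
      have hdl' : π'.dropLast = a' :: w2 := by rw [hform', List.dropLast_concat]
      have heq' : (a : A) :: w1 = a' :: w2 := by
        rw [← hdl, ← hdl']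
        exact heq
      injection heq' with h1 h2
      rw [hform, hform', h1, h2]
  calc ∑ w ∈ P0, (P2.filter (fun π => core π = w)).card
      ≤ ∑ w ∈ P0, ((FL x (n+1)).filter (fun v => v.tail = w)).card :=
        Finset.sum_le_sum hfib
    _ ≤ P0.card + 1 := by
        apply sum_le_card_add_one
        · intro w hw
          exact hle2 w (Finset.mem_of_mem_filter w hw)
        · intro b hb b' hb' hne h2 h2'
          exact huniq b (Finset.mem_of_mem_filter b hb) b'
            (Finset.mem_of_mem_filter b' hb') hne h2 h2'


/-! ### The backward direction -/

lemma backward_dir (u : ℕ → A) [Finite A] {k n₀ c : ℕ}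
    (hQS : ∀ n, n₀ ≤ n → factorComplexity u n = n + c)
    (hcl : ∀ w ∈ Lang (fun i => u (i + k)), w.reverse ∈ Lang (fun i => u (i + k))) :
    ∃ N, ∀ n, N ≤ n → reflComplexity u (n + 2) = reflComplexity u n + 1 := by
  classical
  set x : ℕ → A := fun i => u (i + k) with hx
  have hrecx : ∀ w ∈ Lang x, OccursInf x w := recurrent_of_revClosed x hcl
  have hq0x : ∀ n, qCount x n = 0 := by
    intro n
    rw [qCount, Set.ncard_eq_zero (asymSet_finite x n)]
    ext w
    simp only [Set.mem_empty_iff_false, iff_false]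
    intro hw
    exact hw.2 (hcl w hw.1.2)
  have hnotEP : ¬ EventuallyPeriodic u := by
    intro hEP
    obtain ⟨B, hB⟩ := complexity_bdd_of_ep u hEP
    have h1 := hQS (n₀ + B + 1) (by omega)
    have h2 := hB (n₀ + B + 1)
    omega
  have hnotEPx : ¬ EventuallyPeriodic x := by
    rw [hx]
    exact fun h => hnotEP (ep_shift h)
  have hstrictx : ∀ n, factorComplexity x n + 1 ≤ factorComplexity x (n+1) := by
    intro n
    have hm := factorComplexity_mono x n
    rcases Nat.eq_or_lt_of_le hm with h | h
    · exact absurd (ep_of_complexity_eq x h.symm) hnotEPx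
    · omega
  have hlowx : ∀ n, n + 1 ≤ factorComplexity x n := by
    intro n
    induction n with
    | zero => rw [factorComplexity_zero]
    | succ n ih => have := hstrictx n; omega
  obtain ⟨N₅, _, heconst⟩ := mono_bdd_eventually_const (N := 0)
    (f := eCount u k) (fun n _ => eCount_mono u k n) (fun n _ => eCount_le u k n)
  set K₂ : ℕ := max n₀ N₅ with hK₂
  set cx : ℕ := factorComplexity x K₂ - K₂ with hcx
  have hCx : ∀ n, K₂ ≤ n → factorComplexity x n = n + cx := by
    intro n hn
    have h1 := complexity_split u k n
    have h2 := complexity_split u k K₂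
    rw [← hx] at h1 h2
    have h3 := hQS n (le_trans (le_max_left _ _) hn)
    have h4 := hQS K₂ (le_max_left _ _)
    have h5 := heconst n (by omega)
    have h6 := heconst K₂ (by omega)
    have h7 := hlowx K₂
    have h8 := hlowx n
    omega
  have hpal2 : ∀ n, K₂ ≤ n → palComplexity x (n+2) ≤ palComplexity x n := by
    intro n hn
    have h1 : factorComplexity x (n+1) = factorComplexity x n + 1 := by
      rw [hCx (n+1) (by omega), hCx n hn]
      omega
    have h2 := pal_two_step_le x hrecx h1
    have h3 := parity_sCount x n
    have h4 := parity_sCount x (n+2)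
    rw [sCount_split, hq0x] at h3
    rw [sCount_split, hq0x] at h4
    have h5 := hCx n hn
    have h6 := hCx (n+2) (by omega)
    omega
  obtain ⟨N₇, hN₇K, hpconst⟩ := two_step_eventually_const (N := K₂) hpal2
  -- every long palindrome of u belongs to the language of the suffix
  have hclaim : ∀ i, ∃ Bi, ∀ n, Bi ≤ n →
      (factorAt u n i).reverse = factorAt u n i → factorAt u n i ∈ Lang x := by
    intro i
    by_cases hbad : ∃ n', (factorAt u n' i).reverse = factorAt u n' i
        ∧ factorAt u n' i ∉ Lang x
    · obtain ⟨n', hpal', hnot'⟩ := hbad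
      refine ⟨k + n' + 1, ?_⟩
      intro n hn hpal
      exfalso
      set W := factorAt u n i with hW
      have hWlen : W.length = n := factorAt_length u n i
      have hs : factorAt u n' (i + (n - n')) = List.take n' (List.drop (n - n') W) :=
        factorAt_window u (t := n - n') (n := n') (L := n) i (by omega)
      have hrw := reverse_window W (t := 0) (n := n') (by rw [hWlen]; omega)
      rw [hWlen, hpal] at hrw
      simp only [List.drop_zero, Nat.sub_zero] at hrw
      have hpref : W.take n' = factorAt u n' i := by
        rw [hW, factorAt_take u i (by omega)]
      rw [hpref] at hrw
      have hoccrev : (factorAt u n' i).reverse ∈ Lang x := by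
        rw [hx]
        refine mem_lang_shift_iff.mpr ⟨i + (n - n'), by omega, ?_⟩
        rw [occursAt_iff_eq u (n := n') (by rw [List.length_reverse, factorAt_length])]
        exact (hs.trans hrw).symm
      have := hcl _ hoccrev
      rw [List.reverse_reverse] at this
      exact hnot' this
    · push_neg at hbad
      exact ⟨0, fun n _ hpal => hbad n hpal⟩
  set Bf : ℕ → ℕ := fun i => (hclaim i).choose with hBf
  set N₈ : ℕ := (Finset.range k).sup Bf with hN₈
  have hPE : ∀ n, N₈ ≤ n → ∀ π ∈ PalSet u n, π ∈ Lang x := by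
    intro n hn π hπ
    by_cases hmem : π ∈ Lang x
    · exact hmem
    · exfalso
      obtain ⟨i, hocc⟩ := hπ.1.2
      have hextra : π ∈ ExtraSet u k n := ⟨hπ.1, by rw [← hx]; exact hmem⟩
      have hik : i < k := extra_occ_lt hextra hocc
      rw [occursAt_iff_eq u hπ.1.1] at hocc
      have hBi := (hclaim i).choose_spec n
        (le_trans (Finset.le_sup (f := Bf) (Finset.mem_range.mpr hik)) hn)
        (by rw [← hocc]; exact hπ.2)
      rw [← hocc] at hBi
      exact hmem hBi
  have hpaleq : ∀ n, N₈ ≤ n → palComplexity u n = palComplexity x n := by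
    intro n hn
    rw [palComplexity_eq, palComplexity_eq]
    congr 1
    ext π
    constructor
    · intro hπ
      exact ⟨⟨hπ.1.1, hPE n hn π hπ⟩, hπ.2⟩
    · intro hπ
      refine ⟨⟨hπ.1.1, ?_⟩, hπ.2⟩
      have := hπ.1.2
      rw [hx] at this
      exact lang_shift_subset u k this
  -- qCount of u is eventually constant
  have hqb : ∀ n, qCount u n ≤ k := by
    intro n
    refine le_trans (Set.ncard_le_ncard ?_ (extraSet_finite u k n)) (eCount_le u k n)
    intro w hw
    refine ⟨hw.1, ?_⟩
    intro hmem
    exact hw.2 (lang_shift_subset u k (hcl w hmem))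
  obtain ⟨N₉, _, hqconst⟩ := mono_bdd_eventually_const (N := 0)
    (f := qCount u) (fun n _ => qCount_mono u n) (fun n _ => hqb n)
  -- conclusion
  refine ⟨max (max N₇ N₈) (max N₉ n₀), ?_⟩
  intro n hn
  have e1 := two_mul_reflComplexity u (n+2)
  have e2 := two_mul_reflComplexity u n
  have e3 : sCount u (n+2) = palComplexity x (n+2) + qCount u N₉ := by
    rw [sCount_split, hpaleq (n+2) (by omega), hqconst (n+2) (by omega),
      hqconst N₉ (by omega)]
  have e4 : sCount u n = palComplexity x n + qCount u N₉ := by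
    rw [sCount_split, hpaleq n (by omega), hqconst n (by omega),
      hqconst N₉ (by omega)]
  have e5 := hpconst n (by omega)
  have e6 := hQS n (by omega)
  have e7 := hQS (n+2) (by omega)
  omega

end Aux







/-- `r_u(n+2) = r_u(n) + 1` holds for all sufficiently large `n` iff `u`
is quasi-Sturmian and some suffix of `u` has its language closed under reversal. -/
theorem stmt14 {A : Type*} [Fintype A] (u : ℕ → A) :
    (∃ N : ℕ, ∀ n : ℕ, N ≤ n → reflComplexity u (n + 2) = reflComplexity u n + 1) ↔
    (QuasiSturmian u ∧
      ∃ k : ℕ, ∀ w ∈ Lang (fun i => u (i + k)), w.reverse ∈ Lang (fun i => u (i + k))) := by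
  constructor
  · rintro ⟨N, hyp⟩
    exact forward_dir u hyp
  · rintro ⟨⟨n₀, c, hQS⟩, k, hcl⟩
    exact backward_dir u hQS hcl

end ReflPaper
end

section
/- Let u be an aperiodic sequence over a finite alphabet. Then for every n ∈ ℕ there exist a word g of length n and two distinct letters c, d such that both gc and gd occur infinitely many times in u (in particular, g is a right special factor of u). -/
namespace ReflPaper

variable {A : Type*}

/-! If for some `n` no such `g` exists, then each word of length `n` has at most one right
extension by a letter that occurs infinitely often. Only finitely many positions carry a word of
length `n + 1` that occurs finitely often, so beyond some `M` the factor of length `n` at a position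
determines the next letter. By pigeonhole two positions `M ≤ i < j` carry the same factor of
length `n`, and then `u` repeats with period `j - i` from `i` on. -/

@[simp]
theorem length_factorAt (u : ℕ → A) (m i : ℕ) : (factorAt u m i).length = m := by
  simp [factorAt]

theorem factorAt_succ (u : ℕ → A) (m i : ℕ) :
    factorAt u (m + 1) i = factorAt u m i ++ [u (i + m)] := by
  simp [factorAt, List.range_succ]

theorem factorAt_eq_factorAt_iff {u : ℕ → A} {m i j : ℕ} :
    factorAt u m i = factorAt u m j ↔ ∀ k < m, u (i + k) = u (j + k) := by
  simp [factorAt, List.map_inj_left]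

theorem occursAt_factorAt_self (u : ℕ → A) (m i : ℕ) : OccursAt u (factorAt u m i) i := by
  simp [OccursAt]

theorem finite_setOf_not_occursInf_factorAt [Finite A] (u : ℕ → A) (m : ℕ) :
    {i | ¬ OccursInf u (factorAt u m i)}.Finite := by
  have hrare : {w : List A | w.length = m ∧ ¬ OccursInf u w}.Finite :=
    (List.finite_length_eq A m).subset fun _ hw => hw.1
  refine (hrare.biUnion (t := fun w => {i | OccursAt u w i})
    fun _ hw => Set.not_infinite.1 hw.2).subset fun i hi => ?_
  exact Set.mem_biUnion (x := factorAt u m i) ⟨length_factorAt u m i, hi⟩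
    (occursAt_factorAt_self u m i)

theorem eventually_occursInf_factorAt [Finite A] (u : ℕ → A) (m : ℕ) :
    ∀ᶠ i in Filter.atTop, OccursInf u (factorAt u m i) := by
  simpa [← Nat.cofinite_eq_atTop] using
    (finite_setOf_not_occursInf_factorAt u m).eventually_cofinite_notMem

theorem exists_lt_factorAt_eq [Finite A] (u : ℕ → A) (m M : ℕ) :
    ∃ i j, M ≤ i ∧ i < j ∧ factorAt u m i = factorAt u m j := by
  obtain ⟨i, hi, j, -, hij, hfac⟩ := (Set.Ici_infinite M).exists_lt_map_eq_of_mapsTo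
    (fun i _ => length_factorAt u m i) (List.finite_length_eq A m)
  exact ⟨i, j, hi, hij, hfac⟩

theorem eventuallyPeriodic_of_forall_add_eq {u : ℕ → A} {i j : ℕ} (hij : i < j)
    (h : ∀ t, u (i + t) = u (j + t)) : EventuallyPeriodic u := by
  refine ⟨i, j - i, by omega, fun s hs => ?_⟩
  have := h (s - i)
  rwa [Nat.add_sub_cancel' hs, show j + (s - i) = s + (j - i) by omega, eq_comm] at this

section NextLetterDetermined

variable {u : ℕ → A} {n M : ℕ}

theorem forall_add_eq_of_factorAt_eq
    (hnext : ∀ i j, M ≤ i → M ≤ j → factorAt u n i = factorAt u n j → u (i + n) = u (j + n))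
    {i j : ℕ} (hi : M ≤ i) (hj : M ≤ j) (hfac : factorAt u n i = factorAt u n j) :
    ∀ t, u (i + t) = u (j + t) := by
  intro t
  induction t using Nat.strong_induction_on with
  | _ t ih =>
    rcases lt_or_ge t n with ht | ht
    · exact factorAt_eq_factorAt_iff.1 hfac t ht
    · obtain ⟨s, rfl⟩ := Nat.exists_eq_add_of_le' ht
      have hfac' : factorAt u n (i + s) = factorAt u n (j + s) :=
        factorAt_eq_factorAt_iff.2 fun k hk => by simpa [add_assoc] using ih (s + k) (by omega)
      simpa [add_assoc] using hnext _ _ (by omega) (by omega) hfac'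

theorem eventuallyPeriodic_of_next_letter_determined [Finite A]
    (hnext : ∀ i j, M ≤ i → M ≤ j → factorAt u n i = factorAt u n j → u (i + n) = u (j + n)) :
    EventuallyPeriodic u := by
  obtain ⟨i, j, hi, hij, hfac⟩ := exists_lt_factorAt_eq u n M
  exact eventuallyPeriodic_of_forall_add_eq hij
    (forall_add_eq_of_factorAt_eq hnext hi (by omega) hfac)

end NextLetterDetermined

/-- for aperiodic `u` and every `n`, there are a word `g` of length `n`
and distinct letters `c, d` such that `gc` and `gd` occur infinitely many times in `u`. -/
theorem stmt17 {A : Type*} [Fintype A] (u : ℕ → A) (hu : ¬ EventuallyPeriodic u) :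
    ∀ n : ℕ, ∃ (g : List A) (c d : A), g.length = n ∧ c ≠ d ∧
      OccursInf u (g ++ [c]) ∧ OccursInf u (g ++ [d]) := by
  intro n
  by_contra hcon
  push Not at hcon
  obtain ⟨M, hM⟩ := Filter.eventually_atTop.1 (eventually_occursInf_factorAt u (n + 1))
  refine hu (eventuallyPeriodic_of_next_letter_determined (n := n) (M := M) ?_)
  intro i j hi hj hfac
  by_contra hne
  refine hcon (factorAt u n i) _ _ (length_factorAt u n i) hne ?_ ?_
  · rw [← factorAt_succ]
    exact hM i hi
  · rw [hfac, ← factorAt_succ]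
    exact hM j hj

end ReflPaper
end

section
/- Let u be an aperiodic sequence over a finite alphabet in which at least three distinct letters occur, and suppose r_u(2) = 2. Then there exist pairwise distinct letters a, b, c and an aperiodic sequence v over {a, b} such that u = π(v) or u = c·π(v); in particular, the set of factors of u of length 2 is exactly {ac, bc, ca, cb}. -/
/-!
A factor `xy` of length two is determined up to reversal by the unordered pair `s(x, y)`, so
`r_u(2) = 2` says that every pair of consecutive letters of `u` spans one of two edges `e₁, e₂` of
the complete graph on the alphabet. If the edges were disjoint, `u` could never leave the edge
containing `u 0`, and only two letters would occur; so they share a letter `c`, and as three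
letters occur, `e₁ = {c, a}` and `e₂ = {c, b}` with `a, b, c` distinct: a star with hub `c`. Every
factor of length two then contains `c` exactly once, so `c` fills every other position. Finally
each of `ac, ca, bc, cb` occurs: were, say, `ca` missing, `u` would be `(cb)^ω` after its first
`c`.
-/

namespace ReflPaper

variable {A : Type*}

lemma factorAt_two (u : ℕ → A) (i : ℕ) : factorAt u 2 i = [u i, u (i + 1)] := by
  simp [factorAt, List.range_succ]

lemma mem_langN_two_iff {u : ℕ → A} {w : List A} : w ∈ LangN u 2 ↔ ∃ i, w = [u i, u (i + 1)] := by
  simp only [LangN, Lang, OccursAt, Set.mem_ofPred_eq]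
  constructor
  · rintro ⟨hlen, i, hi⟩
    exact ⟨i, by rwa [hlen, factorAt_two] at hi⟩
  · rintro ⟨i, rfl⟩
    exact ⟨rfl, i, (factorAt_two u i).symm⟩

section Periodicity

variable {u : ℕ → A}

lemma eventuallyPeriodic_of_two_cycle {x y : A} {i₀ : ℕ} (h₀ : u i₀ = x)
    (hx : ∀ i, u i = x → u (i + 1) = y) (hy : ∀ i, u i = y → u (i + 1) = x) :
    EventuallyPeriodic u := by
  have hxy : ∀ i, i₀ ≤ i → u i = x ∨ u i = y := by
    intro i hi
    induction i, hi using Nat.le_induction with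
    | base => exact Or.inl h₀
    | succ i _ ih => exact ih.elim (fun h => Or.inr (hx i h)) (fun h => Or.inl (hy i h))
  refine ⟨i₀, 2, one_le_two, fun i hi => ?_⟩
  rcases hxy i hi with h | h
  · rw [hy (i + 1) (hx i h), h]
  · rw [hx (i + 1) (hy i h), h]

lemma add_mul_eq_of_add_eq {N p : ℕ} (h : ∀ i, N ≤ i → u (i + p) = u i) (k : ℕ) :
    ∀ i, N ≤ i → u (i + k * p) = u i := by
  intro i hi
  induction k with
  | zero => simp
  | succ k ih => rw [Nat.succ_mul, ← Nat.add_assoc, h _ (by omega), ih]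

lemma eventuallyPeriodic_of_even_odd (heven : EventuallyPeriodic fun i => u (2 * i))
    (hodd : EventuallyPeriodic fun i => u (2 * i + 1)) : EventuallyPeriodic u := by
  obtain ⟨N, p, hp, hN⟩ := heven
  obtain ⟨M, q, hq, hM⟩ := hodd
  refine ⟨2 * (N + M), 2 * (q * p), by have := Nat.mul_le_mul hq hp; omega, fun i hi => ?_⟩
  obtain ⟨k, rfl | rfl⟩ := Nat.even_or_odd' i
  · have := add_mul_eq_of_add_eq (u := fun i => u (2 * i)) hN q k (by omega)
    rwa [Nat.mul_add] at this
  · have := add_mul_eq_of_add_eq (u := fun i => u (2 * i + 1)) hM p k (by omega)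
    rwa [Nat.mul_add, Nat.add_right_comm, Nat.mul_comm p q] at this

end Periodicity

section Letters

variable {u : ℕ → A}

lemma not_three_letters_of_forall_eq_or_eq {p q : A} (h : ∀ i, u i = p ∨ u i = q) :
    ¬ ∃ i j k : ℕ, u i ≠ u j ∧ u j ≠ u k ∧ u i ≠ u k := by
  rintro ⟨i, j, k, hij, hjk, hik⟩
  rcases h i with hi | hi <;> rcases h j with hj | hj <;> rcases h k with hk | hk <;>
    simp_all

lemma succ_mem_iff_of_disjoint {e₁ e₂ : Sym2 A}
    (he : ∀ i, s(u i, u (i + 1)) = e₁ ∨ s(u i, u (i + 1)) = e₂) (hdisj : ∀ x ∈ e₁, x ∉ e₂)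
    (i : ℕ) : u (i + 1) ∈ e₁ ↔ u i ∈ e₁ := by
  have hl := Sym2.mem_mk_left (u i) (u (i + 1))
  have hr := Sym2.mem_mk_right (u i) (u (i + 1))
  rcases he i with h | h <;> rw [h] at hl hr
  · exact iff_of_true hr hl
  · exact iff_of_false (fun h => hdisj _ h hr) (fun h => hdisj _ h hl)

lemma not_three_letters_of_disjoint {e₁ e₂ : Sym2 A}
    (he : ∀ i, s(u i, u (i + 1)) = e₁ ∨ s(u i, u (i + 1)) = e₂) (hdisj : ∀ x ∈ e₁, x ∉ e₂) :
    ¬ ∃ i j k : ℕ, u i ≠ u j ∧ u j ≠ u k ∧ u i ≠ u k := by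
  have hmem : ∀ i, u i ∈ e₁ ↔ u 0 ∈ e₁ := fun i => by
    induction i with
    | zero => rfl
    | succ i ih => rw [succ_mem_iff_of_disjoint he hdisj, ih]
  have hcomp : ∀ e : Sym2 A, (∀ i, u i ∈ e) → ¬ ∃ i j k : ℕ, u i ≠ u j ∧ u j ≠ u k ∧ u i ≠ u k :=
    Sym2.ind fun x y h => not_three_letters_of_forall_eq_or_eq fun i => Sym2.mem_iff.mp (h i)
  by_cases h₀ : u 0 ∈ e₁
  · exact hcomp e₁ fun i => (hmem i).mpr h₀
  · refine hcomp e₂ fun i => ?_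
    have hi := Sym2.mem_mk_left (u i) (u (i + 1))
    rcases he i with h | h <;> rw [h] at hi
    exacts [absurd ((hmem i).mp hi) h₀, hi]

lemma exists_star_of_sym2_cover {e₁ e₂ : Sym2 A}
    (he : ∀ i, s(u i, u (i + 1)) = e₁ ∨ s(u i, u (i + 1)) = e₂)
    (h3 : ∃ i j k : ℕ, u i ≠ u j ∧ u j ≠ u k ∧ u i ≠ u k) :
    ∃ a b c : A, a ≠ b ∧ c ≠ a ∧ c ≠ b ∧
      ∀ i, s(u i, u (i + 1)) = s(c, a) ∨ s(u i, u (i + 1)) = s(c, b) := by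
  obtain ⟨c, hc₁, hc₂⟩ : ∃ c, c ∈ e₁ ∧ c ∈ e₂ := by
    by_contra! hdisj
    exact not_three_letters_of_disjoint he hdisj h3
  obtain ⟨a, rfl⟩ : ∃ a, s(c, a) = e₁ := ⟨_, Sym2.other_spec hc₁⟩
  obtain ⟨b, rfl⟩ : ∃ b, s(c, b) = e₂ := ⟨_, Sym2.other_spec hc₂⟩
  have hletter : ∀ i, u i = c ∨ u i = a ∨ u i = b := fun i => by
    have hi := Sym2.mem_mk_left (u i) (u (i + 1))
    rcases he i with h | h <;> rw [h, Sym2.mem_iff] at hi <;> tauto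
  refine ⟨a, b, c, ?_, ?_, ?_, he⟩ <;> rintro rfl
  · exact not_three_letters_of_forall_eq_or_eq (p := c) (q := a)
      (fun i => by have := hletter i; tauto) h3
  · exact not_three_letters_of_forall_eq_or_eq (p := c) (q := b)
      (fun i => by have := hletter i; tauto) h3
  · exact not_three_letters_of_forall_eq_or_eq (p := c) (q := a)
      (fun i => by have := hletter i; tauto) h3

end Letters

section Star

variable {u : ℕ → A} {a b c : A}

lemma succ_eq_hub_iff (hca : c ≠ a) (hcb : c ≠ b)
    (hstar : ∀ i, s(u i, u (i + 1)) = s(c, a) ∨ s(u i, u (i + 1)) = s(c, b)) (i : ℕ) :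
    u (i + 1) = c ↔ u i ≠ c := by
  rcases hstar i with h | h <;> rw [Sym2.eq_iff] at h <;> grind

lemma eq_or_eq_of_ne_hub (hstar : ∀ i, s(u i, u (i + 1)) = s(c, a) ∨ s(u i, u (i + 1)) = s(c, b))
    {i : ℕ} (hi : u i ≠ c) : u i = a ∨ u i = b := by
  rcases hstar i with h | h <;> rw [Sym2.eq_iff] at h <;> grind

lemma hub_even_iff (hca : c ≠ a) (hcb : c ≠ b)
    (hstar : ∀ i, s(u i, u (i + 1)) = s(c, a) ∨ s(u i, u (i + 1)) = s(c, b)) (i : ℕ) :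
    u (2 * i) = c ↔ u 0 = c := by
  induction i with
  | zero => rfl
  | succ i ih =>
    rw [Nat.mul_succ, succ_eq_hub_iff hca hcb hstar, Ne, succ_eq_hub_iff hca hcb hstar,
      not_not, ih]

lemma exists_eq_of_star (hstar : ∀ i, s(u i, u (i + 1)) = s(c, a) ∨ s(u i, u (i + 1)) = s(c, b))
    (h3 : ∃ i j k : ℕ, u i ≠ u j ∧ u j ≠ u k ∧ u i ≠ u k) : ∃ i, u i = a := by
  by_contra! ha
  refine not_three_letters_of_forall_eq_or_eq (p := c) (q := b) (fun i => ?_) h3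
  by_cases hi : u i = c
  · exact Or.inl hi
  · exact Or.inr ((eq_or_eq_of_ne_hub hstar hi).resolve_left (ha i))

lemma exists_hub_succ_eq (hu : ¬ EventuallyPeriodic u) (hca : c ≠ a) (hcb : c ≠ b)
    (hstar : ∀ i, s(u i, u (i + 1)) = s(c, a) ∨ s(u i, u (i + 1)) = s(c, b))
    (ha : ∃ i, u i = a) : ∃ i, u i = c ∧ u (i + 1) = a := by
  by_contra! hno
  obtain ⟨j, hj⟩ := ha
  have hcb' : ∀ i, u i = c → u (i + 1) = b := fun i hi =>
    (eq_or_eq_of_ne_hub hstar fun h => (succ_eq_hub_iff hca hcb hstar i).mp h hi).resolve_left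
      (hno i hi)
  have hbc : ∀ i, u i = b → u (i + 1) = c := fun i hi =>
    (succ_eq_hub_iff hca hcb hstar i).mpr (hi ▸ hcb.symm)
  exact hu (eventuallyPeriodic_of_two_cycle
    ((succ_eq_hub_iff hca hcb hstar j).mpr (hj ▸ hca.symm)) hcb' hbc)

lemma langN_two_eq_star (hu : ¬ EventuallyPeriodic u) (hca : c ≠ a) (hcb : c ≠ b)
    (hstar : ∀ i, s(u i, u (i + 1)) = s(c, a) ∨ s(u i, u (i + 1)) = s(c, b))
    (ha : ∃ i, u i = a) (hb : ∃ i, u i = b) :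
    LangN u 2 = {[a, c], [b, c], [c, a], [c, b]} := by
  have hstar' : ∀ i, s(u i, u (i + 1)) = s(c, b) ∨ s(u i, u (i + 1)) = s(c, a) :=
    fun i => (hstar i).symm
  have hsucc : ∀ {d}, c ≠ d → (∃ i, u i = d) → ∃ i, [d, c] = [u i, u (i + 1)] :=
    fun hcd ⟨i, hi⟩ => ⟨i, by rw [hi, (succ_eq_hub_iff hca hcb hstar i).mpr (hi ▸ hcd.symm)]⟩
  have hpred : ∀ {d}, (∃ i, u i = c ∧ u (i + 1) = d) → ∃ i, [c, d] = [u i, u (i + 1)] :=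
    fun ⟨i, hi, hi'⟩ => ⟨i, by rw [hi, hi']⟩
  ext w
  simp only [mem_langN_two_iff, Set.mem_insert_iff, Set.mem_singleton_iff]
  constructor
  · rintro ⟨i, rfl⟩
    rcases hstar i with h | h <;> rw [Sym2.eq_iff] at h <;> rcases h with ⟨h, h'⟩ | ⟨h, h'⟩ <;>
      simp [h, h']
  · rintro (rfl | rfl | rfl | rfl)
    exacts [hsucc hca ha, hsucc hcb hb, hpred (exists_hub_succ_eq hu hca hcb hstar ha),
      hpred (exists_hub_succ_eq hu hcb hca hstar' hb)]

lemma exists_binary_interleaving (hu : ¬ EventuallyPeriodic u) (hca : c ≠ a) (hcb : c ≠ b)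
    (hstar : ∀ i, s(u i, u (i + 1)) = s(c, a) ∨ s(u i, u (i + 1)) = s(c, b)) :
    ∃ v : ℕ → A, (∀ i, v i = a ∨ v i = b) ∧ ¬ EventuallyPeriodic v ∧
      ((∀ i, u (2 * i) = v i ∧ u (2 * i + 1) = c) ∨
       (u 0 = c ∧ ∀ i, u (2 * i + 1) = v i ∧ u (2 * i + 2) = c)) := by
  have hconst : ∀ {f : ℕ → ℕ}, (∀ i, u (f i) = c) → EventuallyPeriodic fun i => u (f i) :=
    fun h => ⟨0, 1, le_rfl, fun i _ => (h _).trans (h _).symm⟩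
  have heven := hub_even_iff hca hcb hstar
  have hodd : ∀ i, u (2 * i + 1) = c ↔ u 0 ≠ c := fun i => by
    rw [succ_eq_hub_iff hca hcb hstar, Ne, heven]
  by_cases h₀ : u 0 = c
  · refine ⟨fun i => u (2 * i + 1), fun i => eq_or_eq_of_ne_hub hstar ?_,
      fun hv => hu (eventuallyPeriodic_of_even_odd (hconst fun i => (heven i).mpr h₀) hv),
      Or.inr ⟨h₀, fun i => ⟨rfl, (heven (i + 1)).mpr h₀⟩⟩⟩
    rw [Ne, hodd, not_not, h₀]
  · refine ⟨fun i => u (2 * i), fun i => eq_or_eq_of_ne_hub hstar ?_,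
      fun hv => hu (eventuallyPeriodic_of_even_odd hv (hconst fun i => (hodd i).mpr h₀)),
      Or.inl fun i => ⟨rfl, (hodd i).mpr h₀⟩⟩
    rwa [Ne, heven]

end Star

section Reflection

lemma reflEquiv_pair_iff {p q x y : A} : ReflEquiv [p, q] [x, y] ↔ s(p, q) = s(x, y) := by
  simp [ReflEquiv]

lemma exists_cover_of_nClasses_eq_two {S : Set (List A)} (hS : nClasses S = 2) :
    ∃ w₁ ∈ S, ∃ w₂ ∈ S, ∀ w ∈ S, ReflEquiv w w₁ ∨ ReflEquiv w w₂ := by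
  obtain ⟨q₁, q₂, -, hq⟩ := Set.ncard_eq_two.mp hS
  obtain ⟨w₁, hw₁, rfl⟩ : q₁ ∈ Quotient.mk (reflSetoid A) '' S := hq ▸ Set.mem_insert _ _
  obtain ⟨w₂, hw₂, rfl⟩ : q₂ ∈ Quotient.mk (reflSetoid A) '' S :=
    hq ▸ Set.mem_insert_of_mem _ rfl
  refine ⟨w₁, hw₁, w₂, hw₂, fun w hw => ?_⟩
  have hw' : Quotient.mk (reflSetoid A) w ∈ ({_, _} : Set _) := hq ▸ Set.mem_image_of_mem _ hw
  rcases hw' with h | h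
  exacts [Or.inl (Quotient.exact h), Or.inr (Quotient.exact h)]

lemma exists_sym2_cover_of_reflComplexity_eq_two {u : ℕ → A} (hr : reflComplexity u 2 = 2) :
    ∃ e₁ e₂ : Sym2 A, ∀ i, s(u i, u (i + 1)) = e₁ ∨ s(u i, u (i + 1)) = e₂ := by
  obtain ⟨_, hw₁, _, hw₂, hcover⟩ := exists_cover_of_nClasses_eq_two hr
  obtain ⟨i₁, rfl⟩ := mem_langN_two_iff.mp hw₁
  obtain ⟨i₂, rfl⟩ := mem_langN_two_iff.mp hw₂
  refine ⟨s(u i₁, u (i₁ + 1)), s(u i₂, u (i₂ + 1)), fun i => ?_⟩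
  simpa only [reflEquiv_pair_iff] using hcover _ (mem_langN_two_iff.mpr ⟨i, rfl⟩)

end Reflection

theorem stmt18_general {A : Type*} (u : ℕ → A) (hu : ¬ EventuallyPeriodic u)
    (h3 : ∃ i j k : ℕ, u i ≠ u j ∧ u j ≠ u k ∧ u i ≠ u k)
    (hr : reflComplexity u 2 = 2) :
    ∃ (a b c : A) (v : ℕ → A), a ≠ b ∧ c ≠ a ∧ c ≠ b ∧
      (∀ i, v i = a ∨ v i = b) ∧ ¬ EventuallyPeriodic v ∧
      ((∀ i, u (2 * i) = v i ∧ u (2 * i + 1) = c) ∨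
       (u 0 = c ∧ ∀ i, u (2 * i + 1) = v i ∧ u (2 * i + 2) = c)) ∧
      LangN u 2 = {[a, c], [b, c], [c, a], [c, b]} := by
  obtain ⟨e₁, e₂, hcover⟩ := exists_sym2_cover_of_reflComplexity_eq_two hr
  obtain ⟨a, b, c, hab, hca, hcb, hstar⟩ := exists_star_of_sym2_cover hcover h3
  have hstar' : ∀ i, s(u i, u (i + 1)) = s(c, b) ∨ s(u i, u (i + 1)) = s(c, a) :=
    fun i => (hstar i).symm
  obtain ⟨v, hv, hvper, hlayout⟩ := exists_binary_interleaving hu hca hcb hstar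
  exact ⟨a, b, c, v, hab, hca, hcb, hv, hvper, hlayout,
    langN_two_eq_star hu hca hcb hstar (exists_eq_of_star hstar h3) (exists_eq_of_star hstar' h3)⟩

/-- an aperiodic `u` with at least three distinct letters occurring and
`r_u(2) = 2` is `π(v)` or `c·π(v)` for an aperiodic binary `v`; in particular
`L_2(u) = {ac, bc, ca, cb}`. -/
theorem stmt18 {A : Type*} [Fintype A] (u : ℕ → A) (hu : ¬ EventuallyPeriodic u)
    (h3 : ∃ i j k : ℕ, u i ≠ u j ∧ u j ≠ u k ∧ u i ≠ u k)
    (hr : reflComplexity u 2 = 2) :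
    ∃ (a b c : A) (v : ℕ → A), a ≠ b ∧ c ≠ a ∧ c ≠ b ∧
      (∀ i, v i = a ∨ v i = b) ∧ ¬ EventuallyPeriodic v ∧
      ((∀ i, u (2 * i) = v i ∧ u (2 * i + 1) = c) ∨
       (u 0 = c ∧ ∀ i, u (2 * i + 1) = v i ∧ u (2 * i + 2) = c)) ∧
      LangN u 2 = {[a, c], [b, c], [c, a], [c, b]} :=
  stmt18_general u hu h3 hr

end ReflPaper
end
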